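/- arXiv:2211.06802 — 9 statements merged into one kernel-verified Lean document; each statement's English description precedes it below -/
import Mathlib

section
/- For permutations u, w in the symmetric group S_n and 1 ≤ k < n, one has u ≤_k w in the extended k-Bruhat order (the order generated by k-edges, i.e., w = u·t_{ab} with a ≤ k < b and u(a) < u(b)) if and only if for all a ≤ k and all b > k, u(a) ≤ w(a) and u(b) ≥ w(b). -/
/-- A `k`-edge in the Bruhat graph of `S_n` (positions 0-indexed: `a`
occupies a 1-indexed position `≤ k` iff `a.val < k`, and `b` a 1-indexed
position `> k` iff `k ≤ b.val`): `w = u * swap a b` with `u a < u b`. -/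
def kEdge {n : ℕ} (k : ℕ) (u w : Equiv.Perm (Fin n)) : Prop :=
  ∃ a b : Fin n, a.val < k ∧ k ≤ b.val ∧ u a < u b ∧ w = u * Equiv.swap a b

/-- The extended `k`-Bruhat order: the reflexive–transitive closure of the
`k`-edge relation. -/
def extKBruhat {n : ℕ} (k : ℕ) : Equiv.Perm (Fin n) → Equiv.Perm (Fin n) → Prop :=
  Relation.ReflTransGen (kEdge k)

/-!
Call the positions `< k` front and the others back. The criterion is a preorder containing
every `k`-edge, which gives one direction. Conversely, let `u ≠ w` satisfy the criterion. Some
back position `b` has `w b < u b`, since otherwise the front sums of values of `u` and `w` agree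
and force `u = w`; take one with `u b` minimal. Count the positions whose value lies in
`[w b, u b)`, under `u` and under `w`: back positions below `u b` are fixed by minimality and `b`
only counts for `w`, so some front position `a` has `w b ≤ u a < u b ≤ w a`. Then
`u → u * swap a b` is a `k`-edge that keeps the criterion towards `w` and strictly raises the
front sum, which is bounded by that of `w`.
-/

open Equiv Finset

variable {n k : ℕ}

def kBruhatCriterion (k : ℕ) (u w : Perm (Fin n)) : Prop :=
  (∀ a : Fin n, a.val < k → u a ≤ w a) ∧ (∀ b : Fin n, k ≤ b.val → w b ≤ u b)

namespace kBruhatCriterion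

instance : IsPreorder (Perm (Fin n)) (kBruhatCriterion k) where
  refl _ := ⟨fun _ _ => le_rfl, fun _ _ => le_rfl⟩
  trans _ _ _ huv hvw := ⟨fun a ha => (huv.1 a ha).trans (hvw.1 a ha),
    fun b hb => (hvw.2 b hb).trans (huv.2 b hb)⟩

theorem of_kEdge {u v : Perm (Fin n)} (h : kEdge k u v) : kBruhatCriterion k u v := by
  obtain ⟨a, b, ha, hb, hab, rfl⟩ := h
  constructor
  · intro p hp
    have hpb : p ≠ b := by rintro rfl; omega
    rcases eq_or_ne p a with rfl | hpa
    · simpa using hab.le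
    · simp [swap_apply_of_ne_of_ne hpa hpb]
  · intro p hp
    have hpa : p ≠ a := by rintro rfl; omega
    rcases eq_or_ne p b with rfl | hpb
    · simpa using hab.le
    · simp [swap_apply_of_ne_of_ne hpa hpb]

theorem mul_swap {u w : Perm (Fin n)} (huw : kBruhatCriterion k u w) {a b : Fin n}
    (ha : a.val < k) (hb : k ≤ b.val) (hba : u b ≤ w a) (hab : w b ≤ u a) :
    kBruhatCriterion k (u * swap a b) w := by
  constructor
  · intro p hp
    have hpb : p ≠ b := by rintro rfl; omega
    rcases eq_or_ne p a with rfl | hpa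
    · simpa using hba
    · simpa [swap_apply_of_ne_of_ne hpa hpb] using huw.1 p hp
  · intro p hp
    have hpa : p ≠ a := by rintro rfl; omega
    rcases eq_or_ne p b with rfl | hpb
    · simpa using hab
    · simpa [swap_apply_of_ne_of_ne hpa hpb] using huw.2 p hp

end kBruhatCriterion

theorem extKBruhat_le_kBruhatCriterion : extKBruhat k ≤ kBruhatCriterion (n := n) k :=
  Relation.reflTransGen_le_of_le fun _ _ => kBruhatCriterion.of_kEdge

def frontSum (k : ℕ) (v : Perm (Fin n)) : ℕ :=
  ∑ p with p.val < k, (v p : ℕ)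

theorem frontSum_lt_of_kEdge {u v : Perm (Fin n)} (h : kEdge k u v) :
    frontSum k u < frontSum k v := by
  obtain ⟨a, b, ha, hb, hab, rfl⟩ := h
  refine sum_lt_sum (fun p hp => ?_) ⟨a, by simpa using ha, by simpa using hab⟩
  exact (kBruhatCriterion.of_kEdge ⟨a, b, ha, hb, hab, rfl⟩).1 p (by simpa using hp)

namespace kBruhatCriterion

variable {u w : Perm (Fin n)}

theorem frontSum_le (huw : kBruhatCriterion k u w) : frontSum k u ≤ frontSum k w :=
  sum_le_sum fun p hp => huw.1 p (by simpa using hp)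

theorem eq_of_forall_back_eq (huw : kBruhatCriterion k u w)
    (hback : ∀ b : Fin n, k ≤ b.val → u b = w b) : u = w := by
  have htotal (v : Perm (Fin n)) :
      frontSum k v + ∑ p with ¬ p.val < k, (v p : ℕ) = ∑ p : Fin n, p.val := by
    rw [frontSum, sum_filter_add_sum_filter_not, Equiv.sum_comp v (fun p : Fin n => (p : ℕ))]
  have hback_sum : ∑ p with ¬ p.val < k, (u p : ℕ) = ∑ p with ¬ p.val < k, (w p : ℕ) :=
    sum_congr rfl fun p hp => by rw [hback p (by simpa using hp)]
  have hfront : ∀ p ∈ ({p | p.val < k} : Finset (Fin n)), (u p : ℕ) = (w p : ℕ) :=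
    (sum_eq_sum_iff_of_le (f := fun p => (u p : ℕ)) (g := fun p => (w p : ℕ))
      fun p hp => huw.1 p (by simpa using hp)).1
      (by have := htotal u; have := htotal w; unfold frontSum at *; omega)
  ext p
  by_cases hp : p.val < k
  · exact hfront p (by simpa using hp)
  · rw [hback p (by omega)]

theorem exists_front_of_minimal_back_descent (huw : kBruhatCriterion k u w) {b : Fin n}
    (hb : k ≤ b.val) (hwb : w b < u b) (hmin : ∀ p : Fin n, k ≤ p.val → u p < u b → u p = w p) :
    ∃ a : Fin n, a.val < k ∧ w b ≤ u a ∧ u a < u b ∧ u b ≤ w a := by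
  set I := Ico (w b) (u b)
  have hcount (v : Perm (Fin n)) :
      #{p | v p ∈ I ∧ p.val < k} + #{p | v p ∈ I ∧ ¬ p.val < k} = #I := by
    rw [← filter_filter, ← filter_filter, card_filter_add_card_filter_not]
    exact card_equiv v (by simp)
  have hback : #{p | u p ∈ I ∧ ¬ p.val < k} < #{p | w p ∈ I ∧ ¬ p.val < k} := by
    refine card_lt_card ((ssubset_iff_of_subset fun p hp => ?_).2 ⟨b, ?_, ?_⟩)
    · simp only [mem_filter, mem_univ, true_and, I, mem_Ico] at hp ⊢
      rw [← hmin p (by omega) hp.1.2]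
      exact hp
    · simpa [I] using ⟨hwb, hb⟩
    · simp [I]
  obtain ⟨a, hau, haw⟩ := exists_mem_notMem_of_card_lt_card
    (s := {p | w p ∈ I ∧ p.val < k}) (t := {p | u p ∈ I ∧ p.val < k})
    (by have := hcount u; have := hcount w; omega)
  simp only [mem_filter, mem_univ, true_and, I, mem_Ico] at hau haw
  exact ⟨a, hau.2, hau.1.1, hau.1.2,
    not_lt.1 fun hwa => haw ⟨⟨hau.1.1.trans (huw.1 a hau.2), hwa⟩, hau.2⟩⟩

theorem exists_kEdge (huw : kBruhatCriterion k u w) (hne : u ≠ w) :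
    ∃ v, kEdge k u v ∧ kBruhatCriterion k v w := by
  obtain ⟨b, hb, hmin⟩ := exists_min_image {p | k ≤ p.val ∧ w p < u p} u <| by
    by_contra hempty
    refine hne (huw.eq_of_forall_back_eq fun p hp => le_antisymm ?_ (huw.2 p hp))
    exact not_lt.1 fun h => hempty ⟨p, by simpa using ⟨hp, h⟩⟩
  simp only [mem_filter, mem_univ, true_and] at hb hmin
  obtain ⟨a, ha, hwb, hab, hba⟩ := huw.exists_front_of_minimal_back_descent hb.1 hb.2
    fun p hp hpb => le_antisymm (not_lt.1 fun h => (hmin p ⟨hp, h⟩).not_gt hpb) (huw.2 p hp)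
  exact ⟨u * swap a b, ⟨a, b, ha, hb.1, hab, rfl⟩, huw.mul_swap ha hb.1 hba hwb⟩

end kBruhatCriterion

theorem extKBruhat_of_kBruhatCriterion {u w : Perm (Fin n)} (huw : kBruhatCriterion k u w) :
    extKBruhat k u w := by
  by_cases heq : u = w
  · exact heq ▸ .refl
  obtain ⟨v, huv, hvw⟩ := huw.exists_kEdge heq
  have hrise := frontSum_lt_of_kEdge huv
  have hbound := hvw.frontSum_le
  exact .head huv (extKBruhat_of_kBruhatCriterion hvw)
termination_by frontSum k w - frontSum k u

theorem stmt0_general (n k : ℕ) (u w : Equiv.Perm (Fin n)) :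
    extKBruhat k u w ↔
      ((∀ a : Fin n, a.val < k → u a ≤ w a) ∧ (∀ b : Fin n, k ≤ b.val → w b ≤ u b)) :=
  ⟨fun h => extKBruhat_le_kBruhatCriterion u w h, extKBruhat_of_kBruhatCriterion⟩

/-- Criterion for the extended `k`-Bruhat order: `u ≤_k w` iff
`u(a) ≤ w(a)` for all positions `a ≤ k` and `u(b) ≥ w(b)` for all positions `b > k`. -/
theorem stmt0 (n k : ℕ) (hk1 : 1 ≤ k) (hkn : k < n) (u w : Equiv.Perm (Fin n)) :
    extKBruhat k u w ↔
      ((∀ a : Fin n, a.val < k → u a ≤ w a) ∧ (∀ b : Fin n, k ≤ b.val → w b ≤ u b)) :=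
  stmt0_general n k u w
end

section
/- Let A be a finite set of formal variables x_a. Then the product (1/(q+z))·(∏_{a∈A}(1+q·x_a)/∏_{a∈A}(1−z·x_a) − 1), viewed as a formal power series in q and z, equals the double sum over α, β ≥ 0 of z^α·q^β times the Schur polynomial s_{(1+α,1^β)}(x_A) of hook shape with arm length α and leg length β. -/
noncomputable section

open MvPolynomial

variable (σ : Type*) [Fintype σ] [DecidableEq σ]

/-- The Schur polynomial of hook shape `(1+α, 1^β)` (arm length `α`, leg
length `β`), via the dual Jacobi–Trudi expansion
`s_{(1+α,1^β)} = Σ_{j=0}^{β} (−1)^j h_{1+α+j} e_{β−j}`. -/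
def hookSchur (α β : ℕ) : MvPolynomial σ ℚ :=
  ∑ j ∈ Finset.range (β + 1),
    ((-1 : ℚ) ^ j) •
      (MvPolynomial.hsymm σ ℚ (1 + α + j) * MvPolynomial.esymm σ ℚ (β - j))

/-- The ambient ring of formal power series in `q` (outer variable) and `z`
(inner variable) over the polynomial ring in the variables `x_a`, `a ∈ A`. -/
abbrev PS := PowerSeries (PowerSeries (MvPolynomial σ ℚ))

/-- The power series variable `q`. -/
def qq : PS σ := PowerSeries.X

/-- The power series variable `z`. -/
def zz : PS σ := PowerSeries.C (R := PowerSeries (MvPolynomial σ ℚ)) PowerSeries.X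

/-- The variable `x_a` as a constant power series. -/
def XX (a : σ) : PS σ :=
  PowerSeries.C (R := PowerSeries (MvPolynomial σ ℚ))
    (PowerSeries.C (R := MvPolynomial σ ℚ) (MvPolynomial.X a))

/-- `Q(x_A) = ∏_{a∈A} (1 + q x_a)`. -/
def Qprod : PS σ := ∏ a : σ, (1 + qq σ * XX σ a)

/-- `Z(x_A) = ∏_{a∈A} (1 − z x_a)`. -/
def Zprod : PS σ := ∏ a : σ, (1 - zz σ * XX σ a)

/-- The double sum `Σ_{α,β≥0} z^α q^β s_{(1+α,1^β)}(x_A)`, recorded via its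
coefficients: the coefficient of `q^β z^α` is the hook Schur polynomial. -/
def Eseries : PS σ := PowerSeries.mk fun β => PowerSeries.mk fun α => hookSchur σ α β

/-!
Write `E(t) = ∏ (1 + t x_a) = Σ e_n t^n` and `H(t) = Σ h_n t^n`, so that `Q = E(q)` and
`H(z) Z = 1` (a product of geometric series). The claim becomes
`(q + z) S = E(q) H(z) - 1`, `S` the hook series. Comparing coefficients of `q^β z^α`, the
interior ones are the Pieri rule `s_{(2+α,1^β)} + s_{(1+α,1^(β+1))} = h_{1+α} e_{1+β}`, which
telescopes in the Jacobi–Trudi sums. On the boundary `s_{(1+α)} = h_{1+α}` is immediate, and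
`s_{(1,1^β)} = e_{1+β}` follows from the same telescoping together with
`Σ_j (-1)^j h_j e_{m-j} = 0` for `m > 0`, i.e. `E(t) H(-t) = 1`.
-/

open Finset

namespace Multiset

theorem prod_map_eq_prod_univ_pow_count {ι M : Type*} [Fintype ι] [DecidableEq ι]
    [CommMonoid M] (s : Multiset ι) (f : ι → M) : (s.map f).prod = ∏ a, f a ^ s.count a := by
  rw [prod_multiset_map_count]
  exact prod_subset (subset_univ _) fun a _ ha => by
    rw [count_eq_zero.2 (by simpa using ha), pow_zero]

end Multiset

namespace PowerSeries

section CommSemiring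

variable {R : Type*} [CommSemiring R]

theorem coeff_prod_one_add_X_mul_C {ι : Type*} (s : Finset ι) (f : ι → R) (d : ℕ) :
    coeff d (∏ i ∈ s, (1 + X * C (f i))) = ∑ t ∈ s.powersetCard d, ∏ i ∈ t, f i := by
  simp_rw [prod_one_add, prod_mul_distrib, prod_const, ← map_prod, map_sum, mul_comm (X ^ _),
    coeff_C_mul_X_pow, powersetCard_eq_filter, sum_filter, eq_comm]

theorem rescale_C (a c : R) : rescale a (C c) = C c := by
  ext n
  rcases n with _ | n <;> simp [coeff_C]

end CommSemiring

theorem one_sub_X_mul_C_mul_mk_pow {R : Type*} [CommRing R] (r : R) :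
    (1 - X * C r) * mk (r ^ ·) = 1 := by
  simpa [rescale_mk, mul_comm] using congrArg (rescale r) (mk_one_mul_one_sub_eq_one R)

end PowerSeries

namespace MvPolynomial

section CommSemiring

variable {σ : Type*} [Fintype σ] {R : Type*} [CommSemiring R]

theorem prod_one_add_X_mul_C_X_eq_mk_esymm :
    ∏ a, (1 + PowerSeries.X * PowerSeries.C (X a)) = PowerSeries.mk (esymm σ R) := by
  refine PowerSeries.ext fun n => ?_
  rw [PowerSeries.coeff_prod_one_add_X_mul_C, PowerSeries.coeff_mk, esymm]

variable [DecidableEq σ]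

theorem hsymm_eq_sum_finsuppAntidiag (n : ℕ) :
    hsymm σ R n = ∑ l ∈ finsuppAntidiag univ n, ∏ a, X a ^ l a := by
  refine sum_bij' (fun s _ => Multiset.toFinsupp s.1)
    (fun l hl => ⟨Finsupp.toMultiset l, by
      rw [Finsupp.card_toMultiset]; exact (mem_finsuppAntidiag'.1 hl).1⟩)
    (fun s _ =>
      mem_finsuppAntidiag'.2 ⟨(Multiset.toFinsupp_sum_eq _).trans s.2, subset_univ _⟩)
    (fun _ _ => mem_univ _) (fun s _ => Sym.ext (by simp)) (fun l _ => by simp)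
    (fun s _ => by simp [Multiset.prod_map_eq_prod_univ_pow_count])

theorem prod_mk_X_pow_eq_mk_hsymm :
    ∏ a, PowerSeries.mk (fun n => (X a : MvPolynomial σ R) ^ n) =
      PowerSeries.mk (hsymm σ R) := by
  refine PowerSeries.ext fun n => ?_
  simp [PowerSeries.coeff_prod, hsymm_eq_sum_finsuppAntidiag]

end CommSemiring

variable {σ : Type*} [Fintype σ] [DecidableEq σ] {R : Type*} [CommRing R]

theorem prod_one_sub_X_mul_C_X_mul_mk_hsymm :
    (∏ a, (1 - PowerSeries.X * PowerSeries.C (X a))) * PowerSeries.mk (hsymm σ R) = 1 := by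
  rw [← prod_mk_X_pow_eq_mk_hsymm, ← prod_mul_distrib]
  exact prod_eq_one fun a _ => PowerSeries.one_sub_X_mul_C_mul_mk_pow _

theorem mk_neg_one_pow_mul_hsymm_mul_mk_esymm :
    PowerSeries.mk (fun n => (-1) ^ n * hsymm σ R n) * PowerSeries.mk (esymm σ R) = 1 := by
  have := congrArg (PowerSeries.rescale (-1))
    (prod_one_sub_X_mul_C_X_mul_mk_hsymm (σ := σ) (R := R))
  simp only [map_mul, map_prod, map_sub, map_one, PowerSeries.rescale_neg_one_X,
    PowerSeries.rescale_C, PowerSeries.rescale_mk, neg_mul, sub_neg_eq_add,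
    prod_one_add_X_mul_C_X_eq_mk_esymm] at this
  rwa [mul_comm] at this

variable (σ R) in
/-- For `a ≥ 1` this is the dual Jacobi–Trudi expansion of the hook Schur polynomial
`s_{(a,1^b)}`. -/
def hookJacobiTrudi (a b : ℕ) : MvPolynomial σ R :=
  ∑ j ∈ range (b + 1), (-1 : R) ^ j • (hsymm σ R (a + j) * esymm σ R (b - j))

theorem hookJacobiTrudi_zero_right (a : ℕ) : hookJacobiTrudi σ R a 0 = hsymm σ R a := by
  simp [hookJacobiTrudi, esymm_zero]

theorem hookJacobiTrudi_zero_left {b : ℕ} (hb : b ≠ 0) : hookJacobiTrudi σ R 0 b = 0 := by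
  have := congrArg (PowerSeries.coeff b)
    (mk_neg_one_pow_mul_hsymm_mul_mk_esymm (σ := σ) (R := R))
  rw [PowerSeries.coeff_mul, Nat.sum_antidiagonal_eq_sum_range_succ_mk, PowerSeries.coeff_one,
    if_neg hb] at this
  simpa [hookJacobiTrudi, smul_eq_C_mul, mul_assoc] using this

theorem hookJacobiTrudi_succ_add (a b : ℕ) :
    hookJacobiTrudi σ R (a + 1) b + hookJacobiTrudi σ R a (b + 1) =
      hsymm σ R a * esymm σ R (b + 1) := by
  rw [hookJacobiTrudi, hookJacobiTrudi, sum_range_succ' _ (b + 1)]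
  simp only [pow_succ, mul_neg_one, neg_smul, sum_neg_distrib, Nat.add_sub_add_right,
    ← add_assoc, add_right_comm a 1, add_zero, pow_zero, one_smul, Nat.sub_zero, add_neg_cancel,
    zero_add]

end MvPolynomial

theorem hookSchur_eq_hookJacobiTrudi (α β : ℕ) :
    hookSchur σ α β = hookJacobiTrudi σ ℚ (1 + α) β := rfl

theorem hookSchur_zero_right (α : ℕ) : hookSchur σ α 0 = hsymm σ ℚ (α + 1) := by
  rw [hookSchur_eq_hookJacobiTrudi, hookJacobiTrudi_zero_right, add_comm]

theorem hookSchur_zero_left (β : ℕ) : hookSchur σ 0 β = esymm σ ℚ (β + 1) := by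
  have := hookJacobiTrudi_succ_add (σ := σ) (R := ℚ) 0 β
  rwa [hookJacobiTrudi_zero_left β.succ_ne_zero, add_zero, hsymm_zero, one_mul] at this

theorem hookSchur_succ_add_hookSchur_succ (α β : ℕ) :
    hookSchur σ (α + 1) β + hookSchur σ α (β + 1) =
      hsymm σ ℚ (α + 1) * esymm σ ℚ (β + 1) := by
  simp only [hookSchur_eq_hookJacobiTrudi, ← add_assoc]
  rw [add_comm 1 α, hookJacobiTrudi_succ_add]

omit [DecidableEq σ] in
theorem coeff_Qprod (β : ℕ) :
    PowerSeries.coeff β (Qprod σ) = PowerSeries.C (esymm σ ℚ β) := by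
  simp only [Qprod, qq, XX, PowerSeries.coeff_prod_one_add_X_mul_C, esymm, map_sum, map_prod]

omit [DecidableEq σ] in
theorem Zprod_eq_C :
    Zprod σ = PowerSeries.C (∏ a, (1 - PowerSeries.X * PowerSeries.C (X a))) := by
  simp [Zprod, zz, XX, map_prod]

theorem qq_add_zz_mul_Eseries :
    (qq σ + zz σ) * Eseries σ =
      Qprod σ * PowerSeries.C (PowerSeries.mk (hsymm σ ℚ)) - 1 := by
  refine PowerSeries.ext fun β => ?_
  simp only [qq, zz, Eseries, add_mul, map_add, map_sub, PowerSeries.coeff_mul_C, coeff_Qprod,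
    PowerSeries.coeff_C_mul, PowerSeries.coeff_one]
  refine PowerSeries.ext fun α => ?_
  rcases β with _ | β <;> rcases α with _ | α <;>
    simp [PowerSeries.coeff_succ_X_mul, PowerSeries.coeff_one, hookSchur_zero_right,
      hookSchur_zero_left, hookSchur_succ_add_hookSchur_succ, mul_comm]

/-- `(1/(q+z))·(Q(x_A)/Z(x_A) − 1) = Σ_{α,β≥0} z^α q^β s_{(1+α,1^β)}(x_A)`,
stated with denominators cleared (note `Z(x_A)` is a unit and `q+z` a
non-zero-divisor in the power series ring). -/
theorem stmt1 : (qq σ + zz σ) * Eseries σ * Zprod σ = Qprod σ - Zprod σ := by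
  rw [qq_add_zz_mul_Eseries, Zprod_eq_C, sub_mul, one_mul, mul_assoc, ← map_mul,
    mul_comm (PowerSeries.mk _), prod_one_sub_X_mul_C_X_mul_mk_hsymm, map_one, mul_one]
end
end

section
/- Let m ≥ 0 and w = t_{a_1 b_1} ⋯ t_{a_m b_m} in S_n. If the iterated divided difference ∂_{a_1 b_1} ⋯ ∂_{a_m b_m} applied to Q(x_A)/Z(x_B) is nonzero for some subsets A ⊆ B of [n], then the set of non-fixed points of w equals {a_1, b_1, ..., a_m, b_m}. -/
noncomputable section

open MvPolynomial

/-- The polynomial ring `ℚ[x_1,…,x_n,q,z]`: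
`Sum.inl i` is the variable `x_i`, `Sum.inr 0` is `q`, `Sum.inr 1` is `z`. -/
abbrev Rng (n : ℕ) := MvPolynomial (Fin n ⊕ Fin 2) ℚ

/-- The field of rational functions in `x_1,…,x_n, q, z` over `ℚ`. -/
abbrev F (n : ℕ) := FractionRing (Rng n)

/-- The variable `x_i`. -/
def XF (n : ℕ) (i : Fin n) : F n := algebraMap (Rng n) (F n) (X (Sum.inl i))

/-- The variable `q`. -/
def qF (n : ℕ) : F n := algebraMap (Rng n) (F n) (X (Sum.inr 0))

/-- The variable `z`. -/
def zF (n : ℕ) : F n := algebraMap (Rng n) (F n) (X (Sum.inr 1))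

/-- The field automorphism `t_{ab}` exchanging the variables `x_a` and `x_b`. -/
def swapVars (n : ℕ) (a b : Fin n) : F n ≃+* F n :=
  IsFractionRing.ringEquivOfRingEquiv
    ((renameEquiv ℚ ((Equiv.swap a b).sumCongr (Equiv.refl (Fin 2)))).toRingEquiv)

/-- The divided difference operator `∂_{ab} f = (f − t_{ab} f)/(x_a − x_b)`. -/
def dd (n : ℕ) (a b : Fin n) (f : F n) : F n :=
  (f - swapVars n a b f) / (XF n a - XF n b)

/-- `Q(x_A) = ∏_{a'∈A} (1 + q x_{a'})`. -/
def Qp (n : ℕ) (A : Finset (Fin n)) : F n := ∏ i ∈ A, (1 + qF n * XF n i)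

/-- `Z(x_B) = ∏_{b'∈B} (1 − z x_{b'})`. -/
def Zp (n : ℕ) (B : Finset (Fin n)) : F n := ∏ i ∈ B, (1 - zF n * XF n i)

/-! Write `Q(x_A)/Z(x_B) = ∏ᵢ (1 + αᵢ xᵢ) / ∏ᵢ (1 - z xᵢ)` with slopes `αᵢ ∈ {q, 0, -z}`.
The denominator is symmetric, and `∂_{ab}` sends `(1 + α x_a)(1 + β x_b)`
to the constant `α - β`, so it multiplies the numerator by `α_a - α_b` and sets both slopes to zero.
Hence the iterated divided difference is a scalar multiple of a product of the same shape, and it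
can only be nonzero if every `∂_{a_k b_k}` meets two different slopes: `a_k ≠ b_k`, and `a_k` or
`b_k` is not among the letters of the later pairs. A product of transpositions each of which brings
in a new point moves exactly the points involved. -/

namespace Equiv.Perm

variable {α : Type*} [DecidableEq α] [Fintype α]

theorem support_swap_mul_of_notMem_support {a b : α} {w : Perm α} (hab : a ≠ b)
    (hb : b ∉ w.support) : (swap a b * w).support = insert a (insert b w.support) := by
  rw [notMem_support] at hb
  ext i
  simp only [mem_support, Perm.mul_apply, Finset.mem_insert, Ne, swap_apply_eq_iff]
  rcases eq_or_ne i a with rfl | hia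
  · simp only [swap_apply_left, true_or, iff_true]
    exact fun h => hab (w.injective (h.trans hb.symm))
  rcases eq_or_ne i b with rfl | hib
  · simp [hb, hab.symm]
  simp [swap_apply_of_ne_of_ne hia hib, hia, hib]

end Equiv.Perm

section FreshChain

variable {α : Type*} [DecidableEq α]

def letters : List (α × α) → Finset α
  | [] => ∅
  | p :: l => insert p.1 (insert p.2 (letters l))

theorem mem_letters {i : α} {l : List (α × α)} :
    i ∈ letters l ↔ ∃ p ∈ l, p.1 = i ∨ p.2 = i := by
  induction l with
  | nil => simp [letters]
  | cons p l ih => simp [letters, ih, eq_comm, or_assoc]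

def FreshChain : List (α × α) → Prop
  | [] => True
  | p :: l => p.1 ≠ p.2 ∧ (p.1 ∉ letters l ∨ p.2 ∉ letters l) ∧ FreshChain l

theorem FreshChain.support_prod_swap [Fintype α] :
    ∀ {l : List (α × α)}, FreshChain l →
      (l.map fun p => Equiv.swap p.1 p.2).prod.support = letters l
  | [], _ => by simp [letters]
  | (a, b) :: l, ⟨hab, hfresh, hl⟩ => by
    have ih := hl.support_prod_swap
    simp only [List.map_cons, List.prod_cons, letters]
    rcases hfresh with ha | hb
    · rw [Equiv.swap_comm, Equiv.Perm.support_swap_mul_of_notMem_support hab.symm (ih ▸ ha), ih,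
        Finset.insert_comm]
    · rw [Equiv.Perm.support_swap_mul_of_notMem_support hab (ih ▸ hb), ih]

end FreshChain

section DividedDifference

variable {n : ℕ}

def SwapInvariant (c : F n) : Prop := ∀ a b : Fin n, swapVars n a b c = c

theorem swapVars_algebraMap (a b : Fin n) (p : Rng n) :
    swapVars n a b (algebraMap (Rng n) (F n) p) =
      algebraMap (Rng n) (F n) (rename ((Equiv.swap a b).sumCongr (Equiv.refl (Fin 2))) p) :=
  IsFractionRing.ringEquivOfRingEquiv_algebraMap _ p

theorem swapVars_XF (a b i : Fin n) : swapVars n a b (XF n i) = XF n (Equiv.swap a b i) := by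
  simp only [XF, swapVars_algebraMap, rename_X]
  rfl

theorem swapInvariant_qF : SwapInvariant (qF n) := fun a b => by
  simp only [qF, swapVars_algebraMap, rename_X]
  rfl

theorem swapInvariant_zF : SwapInvariant (zF n) := fun a b => by
  simp only [zF, swapVars_algebraMap, rename_X]
  rfl

theorem XF_sub_XF_ne_zero {a b : Fin n} (hab : a ≠ b) : XF n a - XF n b ≠ 0 := by
  rw [XF, XF, ← map_sub]
  refine ((IsFractionRing.injective _ _).ne_iff' (map_zero _)).2 (sub_ne_zero.2 fun h => hab ?_)
  simpa using X_injective h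

theorem one_sub_zF_mul_XF_ne_zero (i : Fin n) : 1 - zF n * XF n i ≠ 0 := by
  rw [zF, XF, ← map_mul, ← map_one (algebraMap (Rng n) (F n)), ← map_sub]
  refine ((IsFractionRing.injective _ _).ne_iff' (map_zero _)).2 fun h => ?_
  simpa using congrArg constantCoeff h

theorem dd_self (a : Fin n) (f : F n) : dd n a a f = 0 := by
  simp [dd]

theorem dd_mul_left {a b : Fin n} {c : F n} (hc : swapVars n a b c = c) (f : F n) :
    dd n a b (c * f) = c * dd n a b f := by
  simp only [dd, map_mul, hc, ← mul_sub, mul_div_assoc]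

theorem dd_div_right {a b : Fin n} {R : F n} (hR : swapVars n a b R = R) (f : F n) :
    dd n a b (f / R) = dd n a b f / R := by
  simp only [dd, map_div₀, hR, ← sub_div, div_right_comm _ R]

theorem dd_linear_mul_linear_mul {a b : Fin n} (hab : a ≠ b) {α β R : F n}
    (hα : swapVars n a b α = α) (hβ : swapVars n a b β = β) (hR : swapVars n a b R = R) :
    dd n a b ((1 + α * XF n a) * (1 + β * XF n b) * R) = (α - β) * R := by
  rw [mul_comm _ R, dd_mul_left hR, mul_comm R]
  congr 1
  simp only [dd, map_mul, map_add, map_one, hα, hβ, swapVars_XF, Equiv.swap_apply_left,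
    Equiv.swap_apply_right]
  rw [div_eq_iff (XF_sub_XF_ne_zero hab)]
  ring

theorem swapInvariant_Zp_univ : SwapInvariant (Zp n Finset.univ) := fun a b => by
  simp only [Zp, map_prod, map_sub, map_one, map_mul, swapInvariant_zF a b, swapVars_XF]
  exact Equiv.prod_comp (Equiv.swap a b) fun i => 1 - zF n * XF n i

end DividedDifference

section LinearProduct

variable {n : ℕ}

def linProd (α : Fin n → F n) : F n := ∏ i, (1 + α i * XF n i)

theorem swapInvariant_piecewise_zero {α : Fin n → F n} (hα : ∀ i, SwapInvariant (α i))
    (L : Finset (Fin n)) (i : Fin n) : SwapInvariant (L.piecewise 0 α i) := by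
  by_cases hi : i ∈ L
  · simp [hi, SwapInvariant]
  · simpa [hi] using hα i

theorem swapVars_linProd {α : Fin n → F n} (hα : ∀ i, SwapInvariant (α i)) (a b : Fin n) :
    swapVars n a b (linProd α) = linProd (α ∘ Equiv.swap a b) := by
  simp only [linProd, map_prod, map_add, map_one, map_mul, hα _ a b, swapVars_XF]
  rw [← Equiv.prod_comp (Equiv.swap a b)]
  simp only [Function.comp_apply, Equiv.swap_apply_self]

theorem linProd_eq_prod_mul_linProd_piecewise (α : Fin n → F n) (L : Finset (Fin n)) :
    linProd α = (∏ i ∈ L, (1 + α i * XF n i)) * linProd (L.piecewise 0 α) := by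
  rw [linProd, linProd, ← Finset.univ_inter L, ← Finset.prod_ite_mem, ← Finset.prod_mul_distrib]
  refine Finset.prod_congr rfl fun i _ => ?_
  by_cases hi : i ∈ L <;> simp [hi]

theorem dd_linProd {α : Fin n → F n} (hα : ∀ i, SwapInvariant (α i)) (a b : Fin n) :
    dd n a b (linProd α) = (α a - α b) * linProd (({a, b} : Finset (Fin n)).piecewise 0 α) := by
  rcases eq_or_ne a b with rfl | hab
  · simp [dd_self]
  have hsymm : swapVars n a b (linProd (({a, b} : Finset (Fin n)).piecewise 0 α)) =
      linProd (({a, b} : Finset (Fin n)).piecewise 0 α) := by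
    rw [swapVars_linProd (swapInvariant_piecewise_zero hα _)]
    congr 1
    funext i
    rcases eq_or_ne i a with rfl | hia
    · simp
    rcases eq_or_ne i b with rfl | hib
    · simp
    rw [Function.comp_apply, Equiv.swap_apply_of_ne_of_ne hia hib]
  rw [linProd_eq_prod_mul_linProd_piecewise α {a, b}, Finset.prod_pair hab,
    dd_linear_mul_linear_mul hab (hα a a b) (hα b a b) hsymm]

end LinearProduct

section Iteration

variable {n : ℕ}

def ddCoeff (α : Fin n → F n) : List (Fin n × Fin n) → F n
  | [] => 1
  | p :: l => ((letters l).piecewise 0 α p.1 - (letters l).piecewise 0 α p.2) * ddCoeff α l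

theorem swapInvariant_ddCoeff {α : Fin n → F n} (hα : ∀ i, SwapInvariant (α i)) :
    ∀ l : List (Fin n × Fin n), SwapInvariant (ddCoeff α l)
  | [] => fun _ _ => map_one _
  | p :: l => fun a b => by
    simp only [ddCoeff, map_mul, map_sub, swapInvariant_piecewise_zero hα _ _ a b,
      swapInvariant_ddCoeff hα l a b]

theorem foldr_dd_linProd_div {α : Fin n → F n} (hα : ∀ i, SwapInvariant (α i)) {R : F n}
    (hR : SwapInvariant R) (l : List (Fin n × Fin n)) :
    l.foldr (fun p f => dd n p.1 p.2 f) (linProd α / R) =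
      ddCoeff α l * (linProd ((letters l).piecewise 0 α) / R) := by
  induction l with
  | nil => rw [List.foldr_nil, ddCoeff, letters, Finset.piecewise_empty, one_mul]
  | cons p l ih =>
    have hpiecewise : ({p.1, p.2} : Finset (Fin n)).piecewise 0 ((letters l).piecewise 0 α) =
        (letters (p :: l)).piecewise 0 α := by
      funext i
      by_cases h1 : i = p.1 <;> by_cases h2 : i = p.2 <;> by_cases h3 : i ∈ letters l <;>
        simp [letters, Finset.piecewise, h1, h2, h3]
    rw [List.foldr_cons, ih, dd_mul_left (swapInvariant_ddCoeff hα l _ _), dd_div_right (hR _ _),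
      dd_linProd (swapInvariant_piecewise_zero hα _), hpiecewise, ddCoeff, mul_div_assoc]
    ring

theorem FreshChain.of_ddCoeff_ne_zero {α : Fin n → F n} :
    ∀ {l : List (Fin n × Fin n)}, ddCoeff α l ≠ 0 → FreshChain l
  | [], _ => trivial
  | (a, b) :: l, h => by
    obtain ⟨hslopes, hl⟩ := mul_ne_zero_iff.1 h
    refine ⟨fun hab => hslopes (by rw [hab, sub_self]), ?_, FreshChain.of_ddCoeff_ne_zero hl⟩
    by_contra! hboth
    exact hslopes (by simp [hboth.1, hboth.2])

end Iteration

theorem exists_Qp_div_Zp_eq_linProd_div {n : ℕ} {A B : Finset (Fin n)} (hAB : A ⊆ B) :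
    ∃ α : Fin n → F n, (∀ i, SwapInvariant (α i)) ∧
      Qp n A / Zp n B = linProd α / Zp n Finset.univ := by
  refine ⟨fun i => if i ∈ A then qF n else if i ∈ B then 0 else -zF n, fun i a b => ?_, ?_⟩
  · dsimp only
    split_ifs
    exacts [swapInvariant_qF a b, map_zero _, by rw [map_neg, swapInvariant_zF a b]]
  have hQ : Qp n A = ∏ i, if i ∈ A then 1 + qF n * XF n i else 1 := by
    rw [Finset.prod_ite_mem, Finset.univ_inter, Qp]
  have hZ : Zp n B = ∏ i, if i ∈ B then 1 - zF n * XF n i else 1 := by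
    rw [Finset.prod_ite_mem, Finset.univ_inter, Zp]
  rw [hQ, hZ, linProd, Zp, ← Finset.prod_div_distrib, ← Finset.prod_div_distrib]
  refine Finset.prod_congr rfl fun i _ => ?_
  by_cases hA : i ∈ A
  · simp [hA, hAB hA]
  by_cases hB : i ∈ B
  · simp [hA, hB]
  · simp only [hA, hB, if_false, neg_mul, ← sub_eq_add_neg, div_self (one_sub_zF_mul_XF_ne_zero i),
      div_one]

/-- If `w = t_{a₁b₁} ⋯ t_{a_m b_m}` and the iterated divided difference
`∂_{a₁b₁} ⋯ ∂_{a_m b_m} (Q(x_A)/Z(x_B))` is nonzero for some `A ⊆ B ⊆ [n]`,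
then the set of non-fixed points of `w` is exactly `{a₁,b₁,…,a_m,b_m}`. -/
theorem stmt4 (n : ℕ) (l : List (Fin n × Fin n)) (A B : Finset (Fin n)) (hAB : A ⊆ B)
    (h : l.foldr (fun p f => dd n p.1 p.2 f) (Qp n A / Zp n B) ≠ 0) :
    {i : Fin n | (l.map fun p => Equiv.swap p.1 p.2).prod i ≠ i} =
      {i : Fin n | ∃ p ∈ l, p.1 = i ∨ p.2 = i} := by
  obtain ⟨α, hα, hbase⟩ := exists_Qp_div_Zp_eq_linProd_div hAB
  rw [hbase, foldr_dd_linProd_div hα swapInvariant_Zp_univ] at h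
  have hfresh : FreshChain l := .of_ddCoeff_ne_zero (left_ne_zero_of_mul h)
  ext i
  rw [Set.mem_ofPred, Set.mem_ofPred, ← Equiv.Perm.mem_support, hfresh.support_prod_swap,
    mem_letters]
end
end

section
/- The nonhomogeneous Demazure–Lusztig operators T_i = −s_i + ∂_i on the polynomial ring ℚ[x_1,...,x_n] satisfy: T_i² = id, T_i T_j = T_j T_i for |i−j| ≥ 2, and T_i T_{i+1} T_i = T_{i+1} T_i T_{i+1}, for all admissible indices i, j in [n−1]. -/
noncomputable section

open MvPolynomial

/-- The field of rational functions `ℚ(x_1,…,x_n)`. -/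
abbrev F5 (n : ℕ) := FractionRing (MvPolynomial (Fin n) ℚ)

/-- The field automorphism exchanging the variables `x_a` and `x_b`. -/
def sAut (n : ℕ) (a b : Fin n) : F5 n ≃+* F5 n :=
  IsFractionRing.ringEquivOfRingEquiv ((renameEquiv ℚ (Equiv.swap a b)).toRingEquiv)

/-- The variable `x_i`. -/
def Xv (n : ℕ) (i : Fin n) : F5 n := algebraMap (MvPolynomial (Fin n) ℚ) (F5 n) (X i)

/-- The BGG Demazure operator `∂_{ab} f = (f − s_{ab} f)/(x_a − x_b)`. -/
def dOp (n : ℕ) (a b : Fin n) (f : F5 n) : F5 n :=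
  (f - sAut n a b f) / (Xv n a - Xv n b)

/-- The nonhomogeneous Demazure–Lusztig operator `T = −s + ∂`. -/
def TOp (n : ℕ) (a b : Fin n) (f : F5 n) : F5 n :=
  - sAut n a b f + dOp n a b f

/-- `T_i` for an adjacent index `i ∈ [n−1]` (0-indexed: swaps `x_i, x_{i+1}`). -/
def Ti (n i : ℕ) (hi : i + 1 < n) : F5 n → F5 n :=
  TOp n ⟨i, Nat.lt_of_succ_lt hi⟩ ⟨i + 1, hi⟩

/-- The embedding `ℚ[x_1,…,x_n] → ℚ(x_1,…,x_n)`. -/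
def emb (n : ℕ) (f : MvPolynomial (Fin n) ℚ) : F5 n :=
  algebraMap (MvPolynomial (Fin n) ℚ) (F5 n) f

/-! All three relations hold for the operator `f ↦ -s f + (f - s f) / u` on any field, where
`s` is an automorphism and `s u = -u`, as soon as the automorphisms satisfy the corresponding
Coxeter relations and move the roots `u` as transpositions move `x_a - x_b`: each relation is
then an identity of rational functions in `f` and its images. On `ℚ(x_1, …, x_n)` the
transpositions act through renaming variables, which is a group action of `S_n`, so the Coxeter
relations of the automorphisms are those of the transpositions. -/

section DemazureLusztig

variable {K : Type*} [Field K]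

def demazureLusztig (s : K ≃+* K) (u f : K) : K := -s f + (f - s f) / u

lemma demazureLusztig_comm (s t : K ≃+* K) (u v : K) (hst : ∀ x, s (t x) = t (s x))
    (hsv : s v = v) (htu : t u = u) (f : K) :
    demazureLusztig s u (demazureLusztig t v f) = demazureLusztig t v (demazureLusztig s u f) := by
  simp only [demazureLusztig, map_add, map_neg, map_sub, map_div₀, hst, hsv, htu]
  ring

lemma demazureLusztig_involutive (s : K ≃+* K) (u : K) (hs : Function.Involutive s)
    (hsu : s u = -u) (hu : u ≠ 0) : Function.Involutive (demazureLusztig s u) := by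
  intro f
  simp only [demazureLusztig, map_add, map_neg, map_sub, map_div₀, hs f, hsu]
  field_simp
  ring

lemma demazureLusztig_braid (s t : K ≃+* K) (a b c : K)
    (hs : Function.Involutive s) (ht : Function.Involutive t)
    (hbr : ∀ x, t (s (t x)) = s (t (s x)))
    (hsa : s a = b) (hsb : s b = a) (hsc : s c = c)
    (hta : t a = a) (htb : t b = c) (htc : t c = b)
    (hab : a ≠ b) (hbc : b ≠ c) (hac : a ≠ c) (f : K) :
    demazureLusztig s (a - b) (demazureLusztig t (b - c) (demazureLusztig s (a - b) f)) =
      demazureLusztig t (b - c) (demazureLusztig s (a - b) (demazureLusztig t (b - c) f)) := by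
  have hab' : a - b ≠ 0 := sub_ne_zero.mpr hab
  have hbc' : b - c ≠ 0 := sub_ne_zero.mpr hbc
  have hac' : a - c ≠ 0 := sub_ne_zero.mpr hac
  simp only [demazureLusztig, map_add, map_neg, map_sub, map_div₀, hs _, ht _, hbr,
    hsa, hsb, hsc, hta, htb, htc]
  field_simp
  ring

end DemazureLusztig

lemma swap_mul_swap_mul_swap_eq_swap_mul_swap_mul_swap {α : Type*} [DecidableEq α] {a b c : α}
    (hab : a ≠ b) (hbc : b ≠ c) (hac : a ≠ c) :
    Equiv.swap b c * Equiv.swap a b * Equiv.swap b c =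
      Equiv.swap a b * Equiv.swap b c * Equiv.swap a b := by
  rw [Equiv.swap_mul_swap_mul_swap hab hac, Equiv.swap_comm a b, Equiv.swap_comm b c,
    Equiv.swap_mul_swap_mul_swap hbc.symm hac.symm, Equiv.swap_comm]

def permAut (n : ℕ) (σ : Equiv.Perm (Fin n)) : F5 n ≃+* F5 n :=
  IsFractionRing.ringEquivOfRingEquiv (renameEquiv ℚ σ).toRingEquiv

lemma sAut_eq_permAut (n : ℕ) (a b : Fin n) : sAut n a b = permAut n (Equiv.swap a b) := rfl

lemma permAut_Xv (n : ℕ) (σ : Equiv.Perm (Fin n)) (c : Fin n) :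
    permAut n σ (Xv n c) = Xv n (σ c) := by
  simp [permAut, Xv]

lemma permAut_one_apply (n : ℕ) (x : F5 n) : permAut n 1 x = x := by
  simp [permAut, Equiv.Perm.one_def, renameEquiv_refl]

lemma permAut_mul_apply (n : ℕ) (σ τ : Equiv.Perm (Fin n)) (x : F5 n) :
    permAut n (σ * τ) x = permAut n σ (permAut n τ x) := by
  have : (permAut n (σ * τ) : F5 n →+* F5 n) =
      (permAut n σ : F5 n →+* F5 n).comp (permAut n τ) :=
    IsLocalization.ringHom_ext (nonZeroDivisors (MvPolynomial (Fin n) ℚ)) <|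
      RingHom.ext fun p => by simp [permAut, rename_rename, Equiv.Perm.coe_mul]
  exact DFunLike.congr_fun this x

lemma permAut_comm (n : ℕ) {σ τ : Equiv.Perm (Fin n)} (h : Commute σ τ) (x : F5 n) :
    permAut n σ (permAut n τ x) = permAut n τ (permAut n σ x) := by
  rw [← permAut_mul_apply, h.eq, permAut_mul_apply]

lemma Xv_injective (n : ℕ) : Function.Injective (Xv n) :=
  (IsFractionRing.injective (MvPolynomial (Fin n) ℚ) (F5 n)).comp X_injective

lemma sAut_Xv (n : ℕ) (a b c : Fin n) : sAut n a b (Xv n c) = Xv n (Equiv.swap a b c) :=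
  permAut_Xv n _ c

lemma sAut_involutive (n : ℕ) (a b : Fin n) : Function.Involutive (sAut n a b) := fun x => by
  rw [sAut_eq_permAut, ← permAut_mul_apply, Equiv.swap_mul_self, permAut_one_apply]

lemma TOp_involutive (n : ℕ) {a b : Fin n} (hab : a ≠ b) : Function.Involutive (TOp n a b) := by
  refine demazureLusztig_involutive _ _ (sAut_involutive n a b) ?_
    (sub_ne_zero.mpr ((Xv_injective n).ne hab))
  rw [map_sub, sAut_Xv, sAut_Xv, Equiv.swap_apply_left, Equiv.swap_apply_right, neg_sub]

lemma TOp_comm (n : ℕ) {a b c d : Fin n} (h : [a, b, c, d].Nodup) (x : F5 n) :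
    TOp n a b (TOp n c d x) = TOp n c d (TOp n a b x) := by
  have hac : a ≠ c := by simp_all
  have had : a ≠ d := by simp_all
  have hbc : b ≠ c := by simp_all
  have hbd : b ≠ d := by simp_all
  refine demazureLusztig_comm _ _ _ _
    (permAut_comm n (Equiv.Perm.disjoint_swap_swap h).commute) ?_ ?_ x
  · rw [map_sub, permAut_Xv, permAut_Xv, Equiv.swap_apply_of_ne_of_ne hac.symm hbc.symm,
      Equiv.swap_apply_of_ne_of_ne had.symm hbd.symm]
  · rw [map_sub, permAut_Xv, permAut_Xv, Equiv.swap_apply_of_ne_of_ne hac had,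
      Equiv.swap_apply_of_ne_of_ne hbc hbd]

lemma TOp_braid (n : ℕ) {a b c : Fin n} (hab : a ≠ b) (hbc : b ≠ c) (hac : a ≠ c) (x : F5 n) :
    TOp n a b (TOp n b c (TOp n a b x)) = TOp n b c (TOp n a b (TOp n b c x)) := by
  refine demazureLusztig_braid _ _ _ _ _ (sAut_involutive n a b) (sAut_involutive n b c)
    (fun y => ?_) ?_ ?_ ?_ ?_ ?_ ?_ ((Xv_injective n).ne hab) ((Xv_injective n).ne hbc)
    ((Xv_injective n).ne hac) x
  · simp only [sAut_eq_permAut, ← permAut_mul_apply, ← mul_assoc,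
      swap_mul_swap_mul_swap_eq_swap_mul_swap_mul_swap hab hbc hac]
  · rw [sAut_Xv, Equiv.swap_apply_left]
  · rw [sAut_Xv, Equiv.swap_apply_right]
  · rw [sAut_Xv, Equiv.swap_apply_of_ne_of_ne hac.symm hbc.symm]
  · rw [sAut_Xv, Equiv.swap_apply_of_ne_of_ne hab hac]
  · rw [sAut_Xv, Equiv.swap_apply_left]
  · rw [sAut_Xv, Equiv.swap_apply_right]

/-- The operators `T_i = −s_i + ∂_i` on `ℚ[x_1,…,x_n]` satisfy `T_i² = id`,
`T_i T_j = T_j T_i` for `|i−j| ≥ 2`, and the braid relation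
`T_i T_{i+1} T_i = T_{i+1} T_i T_{i+1}`, for all admissible indices. -/
theorem stmt5 (n : ℕ) :
    (∀ (i : ℕ) (hi : i + 1 < n) (f : MvPolynomial (Fin n) ℚ),
        Ti n i hi (Ti n i hi (emb n f)) = emb n f) ∧
      (∀ (i j : ℕ) (hi : i + 1 < n) (hj : j + 1 < n),
        (i + 2 ≤ j ∨ j + 2 ≤ i) →
          ∀ f : MvPolynomial (Fin n) ℚ,
            Ti n i hi (Ti n j hj (emb n f)) = Ti n j hj (Ti n i hi (emb n f))) ∧
      (∀ (i : ℕ) (hi : i + 2 < n) (f : MvPolynomial (Fin n) ℚ),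
        Ti n i (Nat.lt_of_succ_lt hi) (Ti n (i + 1) hi
            (Ti n i (Nat.lt_of_succ_lt hi) (emb n f))) =
          Ti n (i + 1) hi (Ti n i (Nat.lt_of_succ_lt hi)
            (Ti n (i + 1) hi (emb n f)))) := by
  refine ⟨fun i hi f => ?_, fun i j hi hj hij f => ?_, fun i hi f => ?_⟩
  · exact TOp_involutive n (by simp [Fin.ext_iff]) _
  · exact TOp_comm n (by simp [Fin.ext_iff]; omega) _
  · exact TOp_braid n (by simp [Fin.ext_iff]) (by simp [Fin.ext_iff])
      (by simp [Fin.ext_iff]; omega) _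
end
end

section
/- Suppose u ≠ w in S_n, and suppose there is a path u = w_0 → w_1 → ⋯ → w_m = w in the extended k-Bruhat order with edge labels τ_i = w_{i−1}(a_i) where w_i = w_{i−1} t_{a_i b_i}, a_i ≤ k < b_i. Then min{u(i) : u(i) ≠ w(i)} = min{τ_1, ..., τ_m}; moreover, the index a attaining min{u(i) : u(i) ≠ w(i)} satisfies a ≤ k. -/
/-!
Along a `k`-path the value at a position `< k` can only grow, and the edge `v → v · t_{ab}` raises
`v(a)` to `v(b)`; so the position `a` of every edge ends up moved, and by induction every label is
`≥ u(i)` for some moved position `i < k`. Conversely, the edge that first moves a position `i < k`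
has label `u(i)`, and the edge that first moves a position `i ≥ k` has a label `< u(i)`. Comparing
minima gives the equality, and also shows that a moved position `≥ k` is never the minimal one.
-/

/-- `IsKPath k u l` : starting from `u`, the list of position pairs `l`
describes a path of `k`-edges in the Bruhat graph of `S_n`. -/
def IsKPath {n : ℕ} (k : ℕ) : Equiv.Perm (Fin n) → List (Fin n × Fin n) → Prop
  | _, [] => True
  | u, p :: l => p.1.val < k ∧ k ≤ p.2.val ∧ u p.1 < u p.2 ∧
      IsKPath k (u * Equiv.swap p.1 p.2) l

/-- The labels `τ_i = w_{i-1}(a_i)` of the edges of a path. -/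
def pathLabels {n : ℕ} : Equiv.Perm (Fin n) → List (Fin n × Fin n) → List (Fin n)
  | _, [] => []
  | u, p :: l => u p.1 :: pathLabels (u * Equiv.swap p.1 p.2) l

/-- The endpoint `u · t_{a₁b₁} ⋯ t_{a_m b_m}` of a path starting at `u`. -/
def pathEnd {n : ℕ} (u : Equiv.Perm (Fin n)) (l : List (Fin n × Fin n)) : Equiv.Perm (Fin n) :=
  u * (l.map fun p => Equiv.swap p.1 p.2).prod

section KPath

variable {n k : ℕ}

@[simp]
lemma pathEnd_nil (u : Equiv.Perm (Fin n)) : pathEnd u [] = u := by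
  simp [pathEnd]

@[simp]
lemma pathEnd_cons (u : Equiv.Perm (Fin n)) (p : Fin n × Fin n) (l : List (Fin n × Fin n)) :
    pathEnd u (p :: l) = pathEnd (u * Equiv.swap p.1 p.2) l := by
  simp [pathEnd, mul_assoc]

@[simp]
lemma pathLabels_cons (u : Equiv.Perm (Fin n)) (p : Fin n × Fin n) (l : List (Fin n × Fin n)) :
    pathLabels u (p :: l) = u p.1 :: pathLabels (u * Equiv.swap p.1 p.2) l :=
  rfl

lemma mul_swap_apply_of_ne_of_ne (u : Equiv.Perm (Fin n)) {a b i : Fin n}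
    (ha : i ≠ a) (hb : i ≠ b) : (u * Equiv.swap a b) i = u i := by
  rw [Equiv.Perm.mul_apply, Equiv.swap_apply_of_ne_of_ne ha hb]

namespace IsKPath

lemma apply_le_pathEnd_apply {u : Equiv.Perm (Fin n)} {l : List (Fin n × Fin n)}
    (hpath : IsKPath k u l) {i : Fin n} (hi : i.val < k) : u i ≤ pathEnd u l i := by
  induction l generalizing u with
  | nil => simp
  | cons p l ih =>
    obtain ⟨ha, hb, hlt, htail⟩ := hpath
    rw [pathEnd_cons]
    refine le_trans ?_ (ih htail)
    by_cases hia : i = p.1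
    · subst hia
      simpa using hlt.le
    · rw [mul_swap_apply_of_ne_of_ne u (b := p.2) hia (by rintro rfl; omega)]

lemma apply_fst_ne_pathEnd_apply_fst {u : Equiv.Perm (Fin n)} {p : Fin n × Fin n} {l : List (Fin n × Fin n)}
    (hpath : IsKPath k u (p :: l)) : u p.1 ≠ pathEnd u (p :: l) p.1 := by
  obtain ⟨ha, -, hlt, htail⟩ := hpath
  have hend := htail.apply_le_pathEnd_apply ha
  rw [Equiv.Perm.mul_apply, Equiv.swap_apply_left] at hend
  rw [pathEnd_cons]
  exact (hlt.trans_le hend).ne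

lemma apply_mem_pathLabels {u : Equiv.Perm (Fin n)} {l : List (Fin n × Fin n)}
    (hpath : IsKPath k u l) {i : Fin n} (hi : i.val < k) (hmoved : u i ≠ pathEnd u l i) :
    u i ∈ pathLabels u l := by
  induction l generalizing u with
  | nil => simp at hmoved
  | cons p l ih =>
    obtain ⟨-, hb, -, htail⟩ := hpath
    rw [pathLabels_cons, List.mem_cons]
    by_cases hia : i = p.1
    · exact Or.inl (congrArg u hia)
    · have hfix := mul_swap_apply_of_ne_of_ne u (b := p.2) hia (by rintro rfl; omega)
      rw [pathEnd_cons, ← hfix] at hmoved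
      exact Or.inr (hfix ▸ ih htail hmoved)

lemma exists_pathLabels_lt {u : Equiv.Perm (Fin n)} {l : List (Fin n × Fin n)}
    (hpath : IsKPath k u l) {i : Fin n} (hi : k ≤ i.val) (hmoved : u i ≠ pathEnd u l i) :
    ∃ τ ∈ pathLabels u l, τ < u i := by
  induction l generalizing u with
  | nil => simp at hmoved
  | cons p l ih =>
    obtain ⟨ha, -, hlt, htail⟩ := hpath
    by_cases hib : i = p.2
    · subst hib
      exact ⟨u p.1, List.mem_cons_self, hlt⟩
    · have hfix := mul_swap_apply_of_ne_of_ne u (a := p.1) (by rintro rfl; omega) hib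
      rw [pathEnd_cons, ← hfix] at hmoved
      obtain ⟨τ, hτ, hτlt⟩ := ih htail hmoved
      exact ⟨τ, List.mem_cons_of_mem _ hτ, hfix ▸ hτlt⟩

lemma exists_moved_le_of_mem_pathLabels {u : Equiv.Perm (Fin n)} {l : List (Fin n × Fin n)}
    (hpath : IsKPath k u l) {τ : Fin n} (hτ : τ ∈ pathLabels u l) :
    ∃ i : Fin n, i.val < k ∧ u i ≠ pathEnd u l i ∧ u i ≤ τ := by
  induction l generalizing u with
  | nil => simp [pathLabels] at hτ
  | cons p l ih =>
    have hhead := hpath.apply_fst_ne_pathEnd_apply_fst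
    obtain ⟨ha, hb, hlt, htail⟩ := hpath
    rcases List.mem_cons.mp hτ with rfl | hτ
    · exact ⟨p.1, ha, hhead, le_rfl⟩
    obtain ⟨i, hi, hmoved, hle⟩ := ih htail hτ
    by_cases hia : i = p.1
    · subst hia
      rw [Equiv.Perm.mul_apply, Equiv.swap_apply_left] at hle
      exact ⟨p.1, ha, hhead, hlt.le.trans hle⟩
    · have hfix := mul_swap_apply_of_ne_of_ne u (b := p.2) hia (by rintro rfl; omega)
      rw [hfix] at hmoved hle
      exact ⟨i, hi, by rwa [pathEnd_cons], hle⟩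

end IsKPath

end KPath

theorem stmt7_general (n k : ℕ) (u w : Equiv.Perm (Fin n))
    (l : List (Fin n × Fin n)) (hpath : IsKPath k u l) (hend : pathEnd u l = w) :
    ((Finset.univ.filter fun i : Fin n => u i ≠ w i).image u).min
        = (pathLabels u l).toFinset.min ∧
      ∀ a : Fin n, u a ≠ w a → (∀ i : Fin n, u i ≠ w i → u a ≤ u i) → a.val < k := by
  subst hend
  have moved_min_le {i : Fin n} (hmoved : u i ≠ pathEnd u l i) :
      ((Finset.univ.filter fun j : Fin n => u j ≠ pathEnd u l j).image u).min ≤ u i :=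
    Finset.min_le (Finset.mem_image_of_mem u (by simpa using hmoved))
  refine ⟨le_antisymm ?_ ?_, ?_⟩
  · refine Finset.le_min fun τ hτ => ?_
    obtain ⟨i, -, hmoved, hle⟩ :=
      hpath.exists_moved_le_of_mem_pathLabels (List.mem_toFinset.mp hτ)
    exact (moved_min_le hmoved).trans (WithTop.coe_le_coe.mpr hle)
  · refine Finset.le_min fun x hx => ?_
    obtain ⟨i, hmoved, rfl⟩ := Finset.mem_image.mp hx
    rw [Finset.mem_filter] at hmoved
    rcases lt_or_ge i.val k with hi | hi
    · exact Finset.min_le (List.mem_toFinset.mpr (hpath.apply_mem_pathLabels hi hmoved.2))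
    · obtain ⟨τ, hτ, hlt⟩ := hpath.exists_pathLabels_lt hi hmoved.2
      exact (Finset.min_le (List.mem_toFinset.mpr hτ)).trans (WithTop.coe_le_coe.mpr hlt.le)
  · intro a hmoved hmin
    by_contra! hak
    obtain ⟨τ, hτ, hlt⟩ := hpath.exists_pathLabels_lt hak hmoved
    obtain ⟨i, -, hi, hle⟩ := hpath.exists_moved_le_of_mem_pathLabels hτ
    exact absurd (hmin i hi) (not_le.mpr (hle.trans_lt hlt))

/-- For a path from `u` to `w ≠ u` in the extended `k`-Bruhat order,
`min{u(i) : u(i) ≠ w(i)}` equals the minimum of the labels, and the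
index attaining `min{u(i) : u(i) ≠ w(i)}` lies among the first `k` positions. -/
theorem stmt7 (n k : ℕ) (u w : Equiv.Perm (Fin n)) (hne : u ≠ w)
    (l : List (Fin n × Fin n)) (hpath : IsKPath k u l) (hend : pathEnd u l = w) :
    ((Finset.univ.filter fun i : Fin n => u i ≠ w i).image u).min
        = (pathLabels u l).toFinset.min ∧
      ∀ a : Fin n, u a ≠ w a → (∀ i : Fin n, u i ≠ w i → u a ≤ u i) → a.val < k :=
  stmt7_general n k u w l hpath hend
end

section
/- Let u ∈ S_n, η ∈ S_n an (m+1)-cycle with m ≥ 2 and u ≤_k u·η. Let a ∈ M(η) attain the minimum of {u(i) : i ∈ M(η)}. Then a ≤ k < η⁻¹(a), and: u(η⁻¹(a)) < u(η(a)) if and only if u → u·t_{a, η⁻¹(a)} is a k-edge with label u(a) and u·t_{a, η⁻¹(a)} ≤_k u·η. Moreover, writing u' = u·t_{a,η⁻¹(a)} and u·η = u'·η', the permutation η' is an m-cycle with ht_k(η') = ht_k(η) and u'M(η') = uM(η) ∖ {u(a)}. -/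
/-!
Since `u ≤_k u·η`, the values of `u·η` dominate those of `u` in positions `< k` and are
dominated by them in positions `≥ k`. This dominance characterizes `≤_k`: any gap can be
shrunk by a single `k`-edge. Comparing it with `u a ≤ u (η a)` and `u a ≤ u (η⁻¹ a)` forces
`a < k ≤ η⁻¹ a`, and the dominance of `u·t_{a,η⁻¹ a}` by `u·η` reduces to the single inequality
`u (η⁻¹ a) ≤ u (η a)` at position `a`. Multiplying the cycle `η` by `t_{a,η⁻¹ a}` just removes
`η⁻¹ a` from it, which gives the remaining assertions.
-/

open Equiv Finset

namespace Equiv.Perm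

section

variable {α : Type*} {f : Perm α} {x : α}

theorem apply_inv_apply (f : Perm α) (x : α) : f (f⁻¹ x) = x :=
  f.apply_symm_apply x

theorem card_filter_apply_mem [Fintype α] [DecidableEq α] (v : Perm α) (J : Finset α) :
    #(univ.filter fun i => v i ∈ J) = #J := by
  rw [show (univ.filter fun i => v i ∈ J) = J.map v.symm.toEmbedding by ext; simp, card_map]

theorem image_mul_swap_sdiff_singleton [DecidableEq α] (u : Perm α) {S : Set α} {a b : α}
    (ha : a ∈ S) (hb : b ∈ S) (hab : a ≠ b) :
    ⇑(u * swap a b) '' (S \ {b}) = u '' S \ {u a} := by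
  rw [coe_mul, Set.image_comp, image_swap_of_mem_of_notMem (show a ∈ S \ {b} from ⟨ha, hab⟩)
    (by simp), Set.insert_sdiff_singleton, Set.insert_eq_of_mem hb, Set.image_sdiff u.injective,
    Set.image_singleton]

theorem IsCycle.swap_inv_mul [DecidableEq α] (hf : f.IsCycle) (hx : f x ≠ x)
    (h : f x ≠ f⁻¹ x) : (swap x (f⁻¹ x) * f).IsCycle := by
  have := hf.swap_mul (x := f⁻¹ x) (ne_of_apply_ne f (by rwa [apply_inv_apply]))
    (by rwa [apply_inv_apply])
  rwa [apply_inv_apply, swap_comm] at this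

end

variable {α : Type*} [DecidableEq α] [Fintype α] {f : Perm α} {x : α}

theorem IsCycle.apply_ne_inv_apply (hf : f.IsCycle) (hx : f x ≠ x) (h3 : 3 ≤ #f.support) :
    f x ≠ f⁻¹ x := by
  intro h
  have hsq : f ^ 2 = 1 :=
    (hf.pow_eq_one_iff' hx).2 (by rw [pow_two, mul_apply, h, apply_inv_apply])
  have := Nat.le_of_dvd two_pos (hf.orderOf ▸ orderOf_dvd_of_pow_eq_one hsq)
  omega

theorem support_swap_inv_mul (h : f x ≠ f⁻¹ x) :
    (swap x (f⁻¹ x) * f).support = f.support.erase (f⁻¹ x) := by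
  have := support_swap_mul_eq f (f⁻¹ x) (by rwa [apply_inv_apply])
  rwa [apply_inv_apply, swap_comm, sdiff_singleton_eq_erase] at this

end Equiv.Perm

def KDominates {n : ℕ} (k : ℕ) (u w : Perm (Fin n)) : Prop :=
  (∀ i : Fin n, i.val < k → u i ≤ w i) ∧ ∀ i : Fin n, k ≤ i.val → w i ≤ u i

namespace KDominates

variable {n k : ℕ} {u v w : Perm (Fin n)}

theorem refl (u : Perm (Fin n)) : KDominates k u u :=
  ⟨fun _ _ => le_rfl, fun _ _ => le_rfl⟩

theorem trans (huv : KDominates k u v) (hvw : KDominates k v w) : KDominates k u w :=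
  ⟨fun i hi => (huv.1 i hi).trans (hvw.1 i hi), fun i hi => (hvw.2 i hi).trans (huv.2 i hi)⟩

theorem mul_swap (h : KDominates k u w) {a b : Fin n} (ha : a.val < k) (hb : k ≤ b.val)
    (hbw : u b ≤ w a) (hwa : w b ≤ u a) : KDominates k (u * swap a b) w := by
  constructor
  · intro i hi
    rcases eq_or_ne i a with rfl | hia
    · simpa using hbw
    · have hib : i ≠ b := by rintro rfl; omega
      simpa [swap_apply_of_ne_of_ne hia hib] using h.1 i hi
  · intro i hi
    rcases eq_or_ne i b with rfl | hib
    · simpa using hwa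
    · have hia : i ≠ a := by rintro rfl; omega
      simpa [swap_apply_of_ne_of_ne hia hib] using h.2 i hi

theorem of_kEdge (h : kEdge k u v) : KDominates k u v := by
  obtain ⟨a, b, ha, hb, hab, rfl⟩ := h
  refine ⟨fun i hi => ?_, fun i hi => ?_⟩ <;> rw [Perm.mul_apply, swap_apply_def] <;>
    split_ifs <;> subst_vars <;> first | exact le_rfl | exact hab.le | omega

/-- Both `u` and `w` are bijections, so their values have the same sum; dominance then splits
this equality into equalities on positions `< k` and `≥ k`, each of them termwise. -/
theorem eq_of_forall_lt (h : KDominates k u w) (hlow : ∀ i : Fin n, i.val < k → u i = w i) :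
    u = w := by
  let val : Fin n → ℕ := Fin.val
  have htotal : ∑ i, val (w i) = ∑ i, val (u i) := by
    rw [Equiv.sum_comp w val, Equiv.sum_comp u val]
  have hsum_low : ∑ i ∈ univ.filter (fun i : Fin n => i.val < k), val (w i) =
      ∑ i ∈ univ.filter (fun i : Fin n => i.val < k), val (u i) :=
    sum_congr rfl fun i hi => by rw [hlow i (mem_filter.1 hi).2]
  have hsum_high : ∑ i ∈ univ.filter (fun i : Fin n => ¬ i.val < k), val (w i) =
      ∑ i ∈ univ.filter (fun i : Fin n => ¬ i.val < k), val (u i) := by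
    have hw := sum_filter_add_sum_filter_not univ (fun i : Fin n => i.val < k) (val ∘ w)
    have hu := sum_filter_add_sum_filter_not univ (fun i : Fin n => i.val < k) (val ∘ u)
    simp only [Function.comp_apply] at hw hu
    omega
  have hhigh := (sum_eq_sum_iff_of_le fun i hi =>
    Fin.le_def.1 (h.2 i (not_lt.1 (mem_filter.1 hi).2))).1 hsum_high
  ext i
  by_cases hi : i.val < k
  · rw [hlow i hi]
  · exact (hhigh i (by simpa using hi)).symm

/-- The swap is found by taking `a < k` with `u a < w a` and `u a` maximal, and counting positions
whose values lie in `(u a, w a]` under `u` and under `w`. -/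
theorem exists_swap (h : KDominates k u w) (hne : u ≠ w) :
    ∃ a b : Fin n, a.val < k ∧ k ≤ b.val ∧ u a < u b ∧ u b ≤ w a ∧ w b ≤ u a := by
  obtain ⟨a₀, ha₀⟩ : ∃ a : Fin n, a.val < k ∧ u a < w a := by
    by_contra! hno
    exact hne (h.eq_of_forall_lt fun i hi => le_antisymm (h.1 i hi) (hno i hi))
  obtain ⟨a, ha, hmax⟩ :=
    exists_max_image (univ.filter fun i : Fin n => i.val < k ∧ u i < w i) u ⟨a₀, by simpa using ha₀⟩
  simp only [mem_filter, mem_univ, true_and] at ha hmax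
  set J := Ioc (u a) (w a)
  obtain ⟨b, hb, hubJ, hwbJ⟩ : ∃ b : Fin n, k ≤ b.val ∧ u b ∈ J ∧ w b ∉ J := by
    by_contra! hno
    have hsub : (univ.filter fun i => u i ∈ J) ⊂ univ.filter fun i => w i ∈ J := by
      refine (ssubset_iff_of_subset fun i => ?_).2 ⟨a, by simp [J, ha.2], by simp [J]⟩
      simp only [mem_filter, mem_univ, true_and]
      intro hi
      by_cases hik : i.val < k
      · have hui : u i = w i := le_antisymm (h.1 i hik) <| not_lt.1 fun hlt =>
          (hmax i ⟨hik, hlt⟩).not_gt (mem_Ioc.1 hi).1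
        rwa [← hui]
      · exact hno i (not_lt.1 hik) hi
    have := card_lt_card hsub
    rw [Perm.card_filter_apply_mem, Perm.card_filter_apply_mem] at this
    exact this.false
  obtain ⟨hab, hbw⟩ := mem_Ioc.1 hubJ
  refine ⟨a, b, ha.1, hb, hab, hbw, not_lt.1 fun hlt => hwbJ ?_⟩
  exact mem_Ioc.2 ⟨hlt, (h.2 b hb).trans hbw⟩

end KDominates

section

variable {n k : ℕ} {u w : Perm (Fin n)}

theorem extKBruhat.kDominates (h : extKBruhat k u w) : KDominates k u w := by
  induction h with
  | refl => exact .refl u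
  | tail _ e ih => exact ih.trans (.of_kEdge e)

/-- Each `k`-edge from `KDominates.exists_swap` strictly decreases the gap
`∑_{i < k} (w i - u i)`. -/
theorem extKBruhat_of_kDominates (h : KDominates k u w) : extKBruhat k u w := by
  induction hN : ∑ i ∈ univ.filter (fun i : Fin n => i.val < k), ((w i : ℕ) - u i)
    using Nat.strong_induction_on generalizing u with
  | _ N ih =>
  by_cases huw : u = w
  · exact huw ▸ .refl
  obtain ⟨a, b, ha, hb, hab, hbw, hwa⟩ := h.exists_swap huw
  have hedge : kEdge k u (u * swap a b) := ⟨a, b, ha, hb, hab, rfl⟩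
  refine .head hedge (ih _ ?_ (h.mul_swap ha hb hbw hwa) rfl)
  rw [← hN]
  refine sum_lt_sum (fun i hi => ?_) ⟨a, by simpa using ha, ?_⟩
  · have := Fin.le_def.1 ((KDominates.of_kEdge hedge).1 i (mem_filter.1 hi).2)
    omega
  · simp only [Perm.mul_apply, swap_apply_left]
    rw [Fin.lt_def] at hab
    rw [Fin.le_def] at hbw
    omega

theorem extKBruhat_iff_kDominates : extKBruhat k u w ↔ KDominates k u w :=
  ⟨extKBruhat.kDominates, extKBruhat_of_kDominates⟩

end

/-- Let `η` be an `(m+1)`-cycle with `m ≥ 2`, `u ≤_k u·η`, and let `a ∈ M(η)`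
attain `min{u(i) : i ∈ M(η)}`. Then `a ≤ k < η⁻¹(a)`, and
`u(η⁻¹(a)) < u(η(a))` iff `u → u·t_{a,η⁻¹(a)}` is a `k`-edge (with label `u a`,
i.e. `u a < u (η⁻¹ a)`) and `u·t_{a,η⁻¹(a)} ≤_k u·η`. Moreover, for
`u' = u·t_{a,η⁻¹(a)}` and `η' = t_{a,η⁻¹(a)}·η` (so that `u'·η' = u·η`),
`η'` is an `m`-cycle with `ht_k(η') = ht_k(η)` and `u'M(η') = uM(η) ∖ {u(a)}`. -/
theorem stmt13 (n k m : ℕ) (hm : 2 ≤ m) (u η : Equiv.Perm (Fin n))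
    (hcyc : η.IsCycle) (hcard : η.support.card = m + 1)
    (hle : extKBruhat k u (u * η))
    (a : Fin n) (ha : η a ≠ a) (hmin : ∀ i : Fin n, η i ≠ i → u a ≤ u i) :
    a.val < k ∧ k ≤ (η⁻¹ a).val ∧
      (u (η⁻¹ a) < u (η a) ↔
        (u a < u (η⁻¹ a) ∧
          extKBruhat k (u * Equiv.swap a (η⁻¹ a)) (u * η))) ∧
      (Equiv.swap a (η⁻¹ a) * η).IsCycle ∧
      (Equiv.swap a (η⁻¹ a) * η).support.card = m ∧
      (Finset.univ.filter fun i : Fin n =>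
          i.val < k ∧ (Equiv.swap a (η⁻¹ a) * η) i ≠ i).card - 1 =
        (Finset.univ.filter fun i : Fin n => i.val < k ∧ η i ≠ i).card - 1 ∧
      (⇑(u * Equiv.swap a (η⁻¹ a))) '' {i : Fin n | (Equiv.swap a (η⁻¹ a) * η) i ≠ i} =
        ((⇑u) '' {i : Fin n | η i ≠ i}) \ {u a} := by
  have hdom := extKBruhat_iff_kDominates.1 hle
  set b := η⁻¹ a
  have hηb : η b = a := η.apply_inv_apply a
  have hba : b ≠ a := fun h => ha (h ▸ hηb)
  have hb : η b ≠ b := hηb ▸ hba.symm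
  have hηa : η a ≠ b := hcyc.apply_ne_inv_apply ha (by omega)
  have hsupp := Perm.support_swap_inv_mul hηa
  have hak : a.val < k := not_le.1 fun hak => ha <| u.injective <|
    le_antisymm (hdom.2 a hak) (hmin (η a) (η.injective.ne ha))
  have hkb : k ≤ b.val := not_lt.1 fun hbk => hba <| u.injective <|
    le_antisymm (hηb ▸ hdom.1 b hbk) (hmin b hb)
  have hab : u a < u b := lt_of_le_of_ne (hηb ▸ hdom.2 b hkb) (u.injective.ne hba.symm)
  refine ⟨hak, hkb, ⟨fun h => ⟨hab, extKBruhat_of_kDominates ?_⟩, fun ⟨_, h⟩ => ?_⟩,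
    hcyc.swap_inv_mul ha hηa, ?_, congrArg (#· - 1) (filter_congr fun i _ => ?_), ?_⟩
  · exact hdom.mul_swap hak hkb h.le (by simp [hηb])
  · have := (extKBruhat_iff_kDominates.1 h).1 a hak
    simp only [Perm.mul_apply, swap_apply_left] at this
    exact lt_of_le_of_ne this (u.injective.ne hηa.symm)
  · rw [hsupp, card_erase_of_mem (Perm.mem_support.2 hb), hcard, Nat.add_sub_cancel]
  · rw [← Perm.mem_support, hsupp, mem_erase, Perm.mem_support]
    exact and_congr_right fun hik => and_iff_right (by rintro rfl; omega)
  · rw [← Perm.coe_support_eq_set_support, hsupp, coe_erase, Perm.coe_support_eq_set_support]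
    exact Perm.image_mul_swap_sdiff_singleton u ha hb hba.symm
end

section
/- Let 1 ≤ ℓ ≤ r, let ζ be a primitive r-th root of unity, and let a_1, ..., a_ℓ be distinct integers in {0, 1, ..., r−1}. Then for every i with r − ℓ < i < r, the complete homogeneous symmetric polynomial evaluates to zero: h_i(ζ^{a_1}, ..., ζ^{a_ℓ}) = 0. -/
/-!
The generating function of the `h_n(y)` is `1 / ∏ⱼ (1 - yⱼ t)`. When the `yⱼ` are `ℓ` distinct
`r`-th roots of unity, multiplying `∏ⱼ (1 - yⱼ t)` by the product `g(t)` of `1 - ω t` over the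
remaining `r - ℓ` roots gives `1 - t ^ r`, so `∑ h_n(y) t ^ n = g(t) / (1 - t ^ r)`. Since `g` has
degree `r - ℓ`, this series has no terms `t ^ n` with `r - ℓ < n < r`.
-/

open Finset

namespace PowerSeries

variable {R : Type*} [CommRing R]

theorem one_sub_C_mul_X_mul_mk_pow (a : R) : (1 - C a * X) * mk (a ^ ·) = 1 := by
  simpa [rescale_mk, rescale_X, mul_comm] using congrArg (rescale a) (mk_one_mul_one_sub_eq_one R)

theorem coeff_one_sub_X_pow_mul_of_lt {n r : ℕ} (h : n < r) (f : R⟦X⟧) :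
    coeff n ((1 - X ^ r) * f) = coeff n f := by
  rw [sub_mul, one_mul, map_sub, coeff_X_pow_mul', if_neg (not_le.mpr h), sub_zero]

end PowerSeries

namespace MvPolynomial

variable {σ R : Type*} [Fintype σ] [DecidableEq σ] [CommRing R]

theorem eval_prod_map_X_toMultiset (y : σ → R) (l : σ →₀ ℕ) :
    eval y ((Finsupp.toMultiset l).map X).prod = ∏ i, y i ^ l i := by
  rw [map_multiset_prod, Multiset.map_map, Function.comp_def]
  simp only [eval_X]
  rw [Finset.prod_multiset_map_count]
  simp only [Finsupp.toFinset_toMultiset, Finsupp.count_toMultiset]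
  exact Finsupp.prod_fintype l _ fun _ => pow_zero _

theorem coeff_prod_mk_pow_eq_eval_hsymm (y : σ → R) (n : ℕ) :
    PowerSeries.coeff n (∏ j, PowerSeries.mk (y j ^ ·)) = eval y (hsymm σ R n) := by
  rw [PowerSeries.coeff_prod, hsymm, map_sum]
  refine sum_bij' (fun l hl => ⟨Finsupp.toMultiset l, ?_⟩) (fun s _ => Multiset.toFinsupp s.1)
    (fun _ _ => mem_univ _) (fun s _ => ?_) (fun l _ => ?_) (fun s _ => ?_) (fun l _ => ?_)
  · rw [Finsupp.card_toMultiset, ← (mem_finsuppAntidiag.mp hl).1,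
      Finsupp.sum_fintype _ _ fun _ => rfl]
    rfl
  · refine mem_finsuppAntidiag.mpr ⟨?_, subset_univ _⟩
    have := (Multiset.toFinsupp_sum_eq s.1).trans s.2
    rwa [Finsupp.sum_fintype _ _ fun _ => rfl] at this
  · simp
  · exact Sym.ext (by simp)
  · simp only [PowerSeries.coeff_mk, eval_prod_map_X_toMultiset]

theorem prod_one_sub_C_mul_X_mul_mk_eval_hsymm (y : σ → R) :
    (∏ j, (1 - PowerSeries.C (y j) * PowerSeries.X)) *
      PowerSeries.mk (fun n => eval y (hsymm σ R n)) = 1 := by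
  have : PowerSeries.mk (fun n => eval y (hsymm σ R n)) = ∏ j, PowerSeries.mk (y j ^ ·) :=
    PowerSeries.ext fun n => by rw [PowerSeries.coeff_mk, coeff_prod_mk_pow_eq_eval_hsymm]
  rw [this, ← prod_mul_distrib]
  exact prod_eq_one fun j _ => PowerSeries.one_sub_C_mul_X_mul_mk_pow (y j)

end MvPolynomial

namespace Polynomial

variable {R ι : Type*} [CommRing R]

theorem reverse_X_pow (n : ℕ) : (X ^ n : R[X]).reverse = 1 := by
  rw [← mul_one (X ^ n), reverse_X_pow_mul, ← C_1, reverse_C]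

theorem reverse_X_sub_C [Nontrivial R] (a : R) : (X - C a).reverse = 1 - C a * X := by
  rw [sub_eq_add_neg, ← C_neg, reverse_add_C, natDegree_X, ← pow_one X, reverse_X_pow, C_neg,
    neg_mul, ← sub_eq_add_neg, pow_one]

theorem reverse_X_pow_sub_one [Nontrivial R] (n : ℕ) :
    (X ^ n - 1 : R[X]).reverse = 1 - X ^ n := by
  rw [sub_eq_add_neg, ← C_1, ← C_neg, reverse_add_C, natDegree_X_pow, reverse_X_pow, C_neg, C_1,
    neg_one_mul, ← sub_eq_add_neg]

theorem reverse_prod_X_sub_C [Nontrivial R] (s : Finset ι) (f : ι → R) :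
    (∏ i ∈ s, (X - C (f i))).reverse = ∏ i ∈ s, (1 - C (f i) * X) := by
  classical
  induction s using Finset.induction_on with
  | empty => simpa using reverse_X_pow (R := R) 0
  | insert i s hi ih =>
    rw [prod_insert hi, prod_insert hi, reverse_mul, ih, reverse_X_sub_C]
    rw [(monic_X_sub_C _).leadingCoeff,
      (monic_prod_of_monic _ _ fun j _ => monic_X_sub_C (f j)).leadingCoeff, one_mul]
    exact one_ne_zero

end Polynomial

namespace IsPrimitiveRoot

open Polynomial

variable {R : Type*} [CommRing R] [IsDomain R] {ζ : R} {r : ℕ}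

theorem prod_nthRootsFinset_one_sub_C_mul_X (hζ : IsPrimitiveRoot ζ r) (hr : 0 < r) :
    ∏ ω ∈ nthRootsFinset r (1 : R), (1 - C ω * X) = 1 - X ^ r := by
  rw [← reverse_prod_X_sub_C, ← X_pow_sub_one_eq_prod hr hζ, reverse_X_pow_sub_one]

theorem exists_prod_one_sub_C_mul_X_mul_eq (hζ : IsPrimitiveRoot ζ r) (hr : 0 < r)
    {σ : Type*} [Fintype σ] {y : σ → R} (hy : Function.Injective y) (hyr : ∀ j, y j ^ r = 1) :
    ∃ g : R[X], g.natDegree ≤ r - Fintype.card σ ∧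
      (∏ j, (1 - C (y j) * X)) * g = 1 - X ^ r := by
  classical
  have hA : univ.image y ⊆ nthRootsFinset r (1 : R) := by
    simp [subset_iff, Polynomial.mem_nthRootsFinset hr, hyr]
  refine ⟨∏ ω ∈ nthRootsFinset r (1 : R) \ univ.image y, (1 - C ω * X), ?_, ?_⟩
  · refine (natDegree_prod_le _ _).trans ((sum_le_card_nsmul _ _ 1 fun ω _ => ?_).trans ?_)
    · compute_degree
    · rw [card_sdiff_of_subset hA, hζ.card_nthRootsFinset, card_image_of_injective _ hy,
        card_univ, smul_eq_mul, mul_one]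
  · rw [← prod_image (f := fun ω => 1 - C ω * X) hy.injOn, mul_comm, prod_sdiff hA,
      hζ.prod_nthRootsFinset_one_sub_C_mul_X hr]

theorem eval_hsymm_eq_zero_of_injective (hζ : IsPrimitiveRoot ζ r) {σ : Type*} [Fintype σ]
    [DecidableEq σ] {y : σ → R} (hy : Function.Injective y) (hyr : ∀ j, y j ^ r = 1) {n : ℕ}
    (hn : r - Fintype.card σ < n) (hnr : n < r) :
    MvPolynomial.eval y (MvPolynomial.hsymm σ R n) = 0 := by
  obtain ⟨g, hg, hyg⟩ := hζ.exists_prod_one_sub_C_mul_X_mul_eq (by omega) hy hyr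
  have hcast := congrArg coeToPowerSeries.ringHom hyg
  simp only [map_mul, map_prod, map_sub, map_one, map_pow, coeToPowerSeries.ringHom_apply, coe_C,
    coe_X] at hcast
  have hgen : (1 - PowerSeries.X ^ r) *
      PowerSeries.mk (fun n => MvPolynomial.eval y (MvPolynomial.hsymm σ R n)) =
        (g : PowerSeries R) := by
    rw [← hcast, mul_right_comm, MvPolynomial.prod_one_sub_C_mul_X_mul_mk_eval_hsymm, one_mul]
  have := congrArg (PowerSeries.coeff n) hgen
  rwa [PowerSeries.coeff_one_sub_X_pow_mul_of_lt hnr, PowerSeries.coeff_mk, coeff_coe,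
    coeff_eq_zero_of_natDegree_lt (by omega)] at this

end IsPrimitiveRoot

theorem stmt14_general (r ℓ : ℕ)
    (ζ : ℂ) (hζ : IsPrimitiveRoot ζ r)
    (a : Fin ℓ → ℕ) (ha : Function.Injective a) (har : ∀ j, a j < r)
    (i : ℕ) (h1 : r - ℓ < i) (h2 : i < r) :
    MvPolynomial.eval (fun j => ζ ^ a j) (MvPolynomial.hsymm (Fin ℓ) ℂ i) = 0 :=
  hζ.eval_hsymm_eq_zero_of_injective (fun j k h => ha (hζ.pow_inj (har j) (har k) h))
    (fun j => by rw [pow_right_comm, hζ.pow_eq_one, one_pow]) (by simpa using h1) h2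

/-- Let `1 ≤ ℓ ≤ r`, `ζ` a primitive `r`-th root of unity, and
`a_1,…,a_ℓ` distinct integers in `{0,…,r−1}`. Then for `r − ℓ < i < r`,
the complete homogeneous symmetric polynomial `h_i(ζ^{a_1},…,ζ^{a_ℓ}) = 0`. -/
theorem stmt14 (r ℓ : ℕ) (hℓ1 : 1 ≤ ℓ) (hℓr : ℓ ≤ r)
    (ζ : ℂ) (hζ : IsPrimitiveRoot ζ r)
    (a : Fin ℓ → ℕ) (ha : Function.Injective a) (har : ∀ j, a j < r)
    (i : ℕ) (h1 : r - ℓ < i) (h2 : i < r) :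
    MvPolynomial.eval (fun j => ζ ^ a j) (MvPolynomial.hsymm (Fin ℓ) ℂ i) = 0 :=
  stmt14_general r ℓ ζ hζ a ha har i h1 h2
end

section
/- Let ζ be a primitive r-th root of unity and d ≥ 1. Then lim_{z→ζ} (1/(z^r−1)^d) · ∏_{i=1}^{dr} (z^i − 1) = (−1)^{rd−d} · r^d · d!. In particular, (ζ−1)(ζ²−1)⋯(ζ^{r−1}−1) = (−1)^{r−1}·r. -/
/-!
Cutting `1, …, d r` into `d` blocks of length `r`, the last factor of the `k`-th block is
`z^{k r} - 1 = (z^r - 1)(1 + z^r + ⋯ + z^{(k-1) r})`. Hence `∏_{i ≤ d r} (z^i - 1) = (z^r - 1)^d G(z)`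
with `G` a polynomial, and the limit is `G(ζ)`. At `ζ` each geometric sum equals `k`, and each
block's remaining `r - 1` factors give `∏_{0 < j < r} (ζ^j - 1) = (-1)^{r-1} r`, so `G(ζ) = d! ((-1)^{r-1} r)^d`.
-/

open Filter Finset Topology
open scoped Nat

theorem Finset.prod_Icc_one_eq_prod_range {M : Type*} [CommMonoid M] (f : ℕ → M) (n : ℕ) :
    ∏ i ∈ Icc 1 n, f i = ∏ i ∈ range n, f (i + 1) := by
  rw [← Ico_add_one_right_eq_Icc, prod_Ico_eq_prod_range]
  simp only [add_tsub_cancel_right, add_comm]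

theorem Finset.prod_range_mul_eq_prod_prod {M : Type*} [CommMonoid M] (f : ℕ → M) (d r : ℕ) :
    ∏ i ∈ range (d * r), f i = ∏ k ∈ range d, ∏ j ∈ range r, f (k * r + j) := by
  induction d with
  | zero => simp
  | succ d ih => rw [add_one_mul, prod_range_add, ih, prod_range_succ]

theorem IsPrimitiveRoot.prod_range_pow_sub_one {R : Type*} [CommRing R] [IsDomain R] {μ : R}
    {n : ℕ} (hμ : IsPrimitiveRoot μ n) (hn : n ≠ 0) :
    ∏ k ∈ range (n - 1), (μ ^ (k + 1) - 1) = (-1) ^ (n - 1) * n := by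
  obtain ⟨m, rfl⟩ := Nat.exists_eq_succ_of_ne_zero hn
  rw [Nat.succ_sub_one, Nat.cast_succ, ← hμ.prod_pow_sub_one_eq_order, ← mul_assoc, ← mul_pow,
    neg_one_mul, neg_neg, one_pow, one_mul]

theorem eventually_pow_ne_one_nhdsNE {𝕜 : Type*} [NontriviallyNormedField 𝕜] [CharZero 𝕜]
    {ζ : 𝕜} {r : ℕ} (hr : r ≠ 0) (hζ : ζ ^ r = 1) : ∀ᶠ z in 𝓝[≠] ζ, z ^ r ≠ 1 := by
  have hζ0 : ζ ≠ 0 := by rintro rfl; simp [zero_pow hr] at hζ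
  simpa only [hζ] using (hasDerivAt_pow r ζ).eventually_ne (c := ζ ^ r)
    (mul_ne_zero (Nat.cast_ne_zero.2 hr) (pow_ne_zero _ hζ0))

section Quotient

variable {R : Type*} [CommRing R]

/-- The polynomial `∏_{i=1}^{d r} (z^i - 1) / (z^r - 1)^d`. -/
def prodPowSubOneQuot (r d : ℕ) (z : R) : R :=
  ∏ k ∈ range d, ((∑ m ∈ range (k + 1), (z ^ r) ^ m) * ∏ j ∈ range (r - 1), (z ^ (k * r + j + 1) - 1))

theorem prod_range_pow_sub_one_eq_mul_prodPowSubOneQuot {r : ℕ} (hr : r ≠ 0) (d : ℕ) (z : R) :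
    ∏ i ∈ range (d * r), (z ^ (i + 1) - 1) = (z ^ r - 1) ^ d * prodPowSubOneQuot r d z := by
  rw [prod_range_mul_eq_prod_prod, prodPowSubOneQuot, pow_eq_prod_const, ← prod_mul_distrib]
  refine prod_congr rfl fun k _ => ?_
  have hlast : z ^ (k * r + (r - 1) + 1) - 1 = (z ^ r - 1) * ∑ m ∈ range (k + 1), (z ^ r) ^ m := by
    rw [mul_geom_sum, ← pow_mul, show k * r + (r - 1) + 1 = r * (k + 1) by
      rw [Nat.mul_add_one, mul_comm]; omega]
  obtain ⟨s, rfl⟩ := Nat.exists_eq_succ_of_ne_zero hr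
  rw [Nat.succ_sub_one] at hlast ⊢
  rw [prod_range_succ, hlast]
  ring

theorem IsPrimitiveRoot.prodPowSubOneQuot_eq [IsDomain R] {ζ : R} {r : ℕ} (hζ : IsPrimitiveRoot ζ r)
    (hr : r ≠ 0) (d : ℕ) : prodPowSubOneQuot r d ζ = d ! * ((-1) ^ (r - 1) * r) ^ d := by
  have hblock (k : ℕ) : ∏ j ∈ range (r - 1), (ζ ^ (k * r + j + 1) - 1) = (-1) ^ (r - 1) * r := by
    simp_rw [add_assoc, pow_add ζ (k * r), pow_mul', hζ.pow_eq_one, one_pow, one_mul]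
    exact hζ.prod_range_pow_sub_one hr
  have hfactorial : ∏ k ∈ range d, ((k : R) + 1) = d ! := by
    rw [← prod_range_add_one_eq_factorial, Nat.cast_prod]
    push_cast
    rfl
  simp only [prodPowSubOneQuot, hζ.pow_eq_one, one_pow, sum_const, card_range, nsmul_one,
    Nat.cast_add_one, hblock, prod_mul_distrib, prod_const, hfactorial, mul_pow]

end Quotient

theorem stmt15_general (r d : ℕ) (hr : 1 ≤ r)
    (ζ : ℂ) (hζ : IsPrimitiveRoot ζ r) :
    Tendsto (fun z : ℂ => (∏ i ∈ Finset.Icc 1 (d * r), (z ^ i - 1)) / (z ^ r - 1) ^ d)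
        (nhdsWithin ζ {ζ}ᶜ)
        (nhds ((-1 : ℂ) ^ (r * d - d) * (r : ℂ) ^ d * (Nat.factorial d : ℂ))) ∧
      ∏ i ∈ Finset.Icc 1 (r - 1), (ζ ^ i - 1) = (-1 : ℂ) ^ (r - 1) * (r : ℂ) := by
  have hr0 : r ≠ 0 := by omega
  refine ⟨?_, by rw [prod_Icc_one_eq_prod_range, hζ.prod_range_pow_sub_one hr0]⟩
  have hlim : (-1 : ℂ) ^ (r * d - d) * r ^ d * d ! = prodPowSubOneQuot r d ζ := by
    rw [hζ.prodPowSubOneQuot_eq hr0, ← Nat.sub_one_mul, pow_mul]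
    ring
  have hcont : Continuous (prodPowSubOneQuot r d : ℂ → ℂ) := by
    unfold prodPowSubOneQuot
    fun_prop
  rw [hlim]
  refine (hcont.continuousAt.tendsto.mono_left nhdsWithin_le_nhds).congr' ?_
  filter_upwards [eventually_pow_ne_one_nhdsNE hr0 hζ.pow_eq_one] with z hz
  rw [prod_Icc_one_eq_prod_range, prod_range_pow_sub_one_eq_mul_prodPowSubOneQuot hr0,
    mul_div_cancel_left₀ _ (pow_ne_zero _ (sub_ne_zero.2 hz))]

/-- For a primitive `r`-th root of unity `ζ` and `d ≥ 1`,
`lim_{z→ζ} (1/(z^r−1)^d) ∏_{i=1}^{dr} (z^i−1) = (−1)^{rd−d} r^d d!`;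
in particular `(ζ−1)(ζ²−1)⋯(ζ^{r−1}−1) = (−1)^{r−1} r`. -/
theorem stmt15 (r d : ℕ) (hr : 1 ≤ r) (hd : 1 ≤ d)
    (ζ : ℂ) (hζ : IsPrimitiveRoot ζ r) :
    Tendsto (fun z : ℂ => (∏ i ∈ Finset.Icc 1 (d * r), (z ^ i - 1)) / (z ^ r - 1) ^ d)
        (nhdsWithin ζ {ζ}ᶜ)
        (nhds ((-1 : ℂ) ^ (r * d - d) * (r : ℂ) ^ d * (Nat.factorial d : ℂ))) ∧
      ∏ i ∈ Finset.Icc 1 (r - 1), (ζ ^ i - 1) = (-1 : ℂ) ^ (r - 1) * (r : ℂ) :=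
  stmt15_general r d hr ζ hζ
end

section
/- Let λ be a partition contained in the k×(n−k) rectangle, and let w_λ ∈ S_n be the associated Grassmannian permutation with descent at k (so λ_i = w_λ(k−i+1) − (k−i+1) for 1 ≤ i ≤ k). Let μ ⊇ λ be a partition in the same rectangle such that μ/λ is a rim hook (connected skew shape with no 2×2 square). Then the height of μ/λ (one less than its number of rows) equals ht_k(w_λ⁻¹ w_μ) = #{i ≤ k : w_λ(i) ≠ w_μ(i)} − 1. -/
/-- `w` is the Grassmannian permutation of the partition `lam` (inside the
`k×(n−k)` rectangle, `lam 0 = λ_1 ≥ lam 1 = λ_2 ≥ …`) with descent at `k`: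
in 0-indexed terms, for positions `p < k` one has
`w(p) = λ_{k−p} + p` (i.e. 1-indexed `w(k−i+1) = λ_i + (k−i+1)`), and the
remaining values occupy positions `≥ k` in increasing order. -/
def IsGrassmannian (n k : ℕ) (lam : Fin k → ℕ) (w : Equiv.Perm (Fin n)) : Prop :=
  (∀ p : Fin n, ∀ hp : p.val < k,
      (w p).val = lam ⟨k - 1 - p.val, by omega⟩ + p.val) ∧
    ∀ p q : Fin n, k ≤ p.val → p < q → w p < w q

/-- `mu/lam` is a rim hook (border strip): `lam ⊆ mu`, the skew shape is
nonempty, its nonempty rows are contiguous, and consecutive nonempty rows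
overlap in exactly one column (`mu_{i+1} = lam_i + 1`), i.e. the shape is
edgewise connected with no `2×2` square. -/
def IsRimHook (k : ℕ) (lam mu : Fin k → ℕ) : Prop :=
  (∀ i, lam i ≤ mu i) ∧ (∃ i, lam i < mu i) ∧
    (∀ i m j : Fin k, i ≤ m → m ≤ j → lam i < mu i → lam j < mu j → lam m < mu m) ∧
    ∀ i j : Fin k, j.val = i.val + 1 → lam i < mu i → lam j < mu j → mu j = lam i + 1

/-! Position `p < k` of `w_λ` carries `λ_{k-p} + p`, so `w_λ` and `w_μ` disagree at `p` exactly
when row `k - p` of `μ/λ` is nonempty; `p ↦ k - p` is then a bijection between the positions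
counted by `ht_k` and the rows of the rim hook. -/

theorem Fin.card_filter_val_lt_and {n k : ℕ} (h : k ≤ n) (P : Fin n → Prop) [DecidablePred P] :
    (Finset.univ.filter fun p : Fin n => p.val < k ∧ P p).card =
      (Finset.univ.filter fun i : Fin k => P (Fin.castLE h i)).card := by
  rw [← Finset.card_map (Fin.castLEEmb h)]
  congr 1
  ext p
  simp only [Finset.mem_filter, Finset.mem_univ, true_and, Finset.mem_map, Fin.coe_castLEEmb]
  constructor
  · rintro ⟨hp, hP⟩
    exact ⟨⟨p, hp⟩, hP, rfl⟩
  · rintro ⟨a, hP, rfl⟩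
    exact ⟨a.isLt, hP⟩

theorem Fin.card_filter_rev {k : ℕ} (P : Fin k → Prop) [DecidablePred P] :
    (Finset.univ.filter fun i : Fin k => P i.rev).card =
      (Finset.univ.filter P).card :=
  Finset.card_equiv Fin.revPerm (by simp)

theorem IsGrassmannian.apply_castLE {n k : ℕ} {lam : Fin k → ℕ} {w : Equiv.Perm (Fin n)}
    (hw : IsGrassmannian n k lam w) (h : k ≤ n) (p : Fin k) :
    (w (Fin.castLE h p)).val = lam p.rev + p.val := by
  rw [hw.1 _ p.isLt]
  exact congrArg (lam · + p.val) (Fin.ext (by simp [Fin.val_rev]; omega))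

theorem IsGrassmannian.apply_castLE_eq_iff {n k : ℕ} {lam mu : Fin k → ℕ}
    {wl wm : Equiv.Perm (Fin n)} (hwl : IsGrassmannian n k lam wl)
    (hwm : IsGrassmannian n k mu wm) (h : k ≤ n) (p : Fin k) :
    wl (Fin.castLE h p) = wm (Fin.castLE h p) ↔ lam p.rev = mu p.rev := by
  rw [Fin.ext_iff, hwl.apply_castLE h, hwm.apply_castLE h, Nat.add_right_cancel_iff]

theorem stmt16_general (n k : ℕ) (hkn : k < n)
    (lam mu : Fin k → ℕ)
    (hrim : IsRimHook k lam mu)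
    (wl wm : Equiv.Perm (Fin n))
    (hwl : IsGrassmannian n k lam wl) (hwm : IsGrassmannian n k mu wm) :
    (Finset.univ.filter fun i : Fin k => lam i < mu i).card - 1 =
      (Finset.univ.filter fun i : Fin n => i.val < k ∧ wl i ≠ wm i).card - 1 := by
  rw [Fin.card_filter_val_lt_and hkn.le, ← Fin.card_filter_rev]
  congr 2
  refine Finset.filter_congr fun p _ => ?_
  rw [ne_eq, hwl.apply_castLE_eq_iff hwm, lt_iff_le_and_ne]
  exact and_iff_right (hrim.1 p.rev)

/-- For a rim hook `μ/λ` inside the `k×(n−k)` rectangle, the height of `μ/λ`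
(one less than its number of rows) equals
`ht_k(w_λ⁻¹ w_μ) = #{i ≤ k : w_λ(i) ≠ w_μ(i)} − 1`. -/
theorem stmt16 (n k : ℕ) (hk : 1 ≤ k) (hkn : k < n)
    (lam mu : Fin k → ℕ) (hlam : Antitone lam) (hmu : Antitone mu)
    (hlb : ∀ i, lam i ≤ n - k) (hmb : ∀ i, mu i ≤ n - k)
    (hrim : IsRimHook k lam mu)
    (wl wm : Equiv.Perm (Fin n))
    (hwl : IsGrassmannian n k lam wl) (hwm : IsGrassmannian n k mu wm) :
    (Finset.univ.filter fun i : Fin k => lam i < mu i).card - 1 =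
      (Finset.univ.filter fun i : Fin n => i.val < k ∧ wl i ≠ wm i).card - 1 :=
  stmt16_general n k hkn lam mu hrim wl wm hwl hwm
end
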